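/- arXiv:1809.01881 — 8 statements merged into one kernel-verified Lean document; each statement's English description precedes it below -/
import Mathlib

section
/- A compact Hausdorff topological space carries a diffuse (atomless) regular Borel probability measure if and only if it contains a nonempty perfect subset. -/
open MeasureTheory TopologicalSpace Set Filter
open scoped ENNReal Topology

/-!
The support of a regular measure carries its full mass, so the support of a diffuse regular
probability measure is nonempty, closed, and has no isolated point, as such a point would be an
atom.

Conversely, closed neighbourhoods of points of a perfect set `S` split into two disjoint ones of
the same kind, which yields a binary tree of closed sets with disjoint siblings. The uniform
probability measures on chosen points of the `2 ^ n` nodes of depth `n` have an ultrafilter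
limit on compact sets, which is a content; its regular measure gives mass at most `2⁻¹ ^ m` to a
neighbourhood of any point `x` that avoids all but one branch of depth `m`.
-/

namespace MeasureTheory.Measure

variable {X : Type*} [TopologicalSpace X] [MeasurableSpace X] {μ : Measure X}

theorem nonempty_support_of_regular [μ.Regular] (hμ : μ ≠ 0) : μ.support.Nonempty := by
  rw [nonempty_iff_ne_empty]
  intro h
  have hnull := measure_compl_support_of_regular (μ := μ)
  rw [h, compl_empty, measure_univ_eq_zero] at hnull
  exact hμ hnull

theorem preperfect_support [NullSingletonClass μ] [μ.Regular] : Preperfect μ.support := by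
  intro x hx
  rw [accPt_iff_nhds]
  intro U hU
  by_contra! hU_sub
  have hcover : U ⊆ μ.supportᶜ ∪ {x} := fun y hy => by
    by_cases hy_supp : y ∈ μ.support
    · exact Or.inr (hU_sub y ⟨hy, hy_supp⟩)
    · exact Or.inl hy_supp
  have hnull : μ U = 0 := measure_mono_null hcover
    (measure_union_null measure_compl_support_of_regular (measure_singleton x))
  exact ((mem_support_iff_forall x).1 hx U hU).ne' hnull

end MeasureTheory.Measure

section Ultralimit

variable {X α : Type*} [MeasurableSpace X] (𝒰 : Ultrafilter α) (μ : α → Measure X)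

noncomputable def measureUltralimit (s : Set X) : ℝ≥0∞ := (𝒰.map fun a => μ a s).lim

theorem tendsto_measureUltralimit (s : Set X) :
    Tendsto (fun a => μ a s) 𝒰 (𝓝 (measureUltralimit 𝒰 μ s)) :=
  Ultrafilter.le_nhds_lim _

theorem measureUltralimit_mono {s t : Set X} (h : s ⊆ t) :
    measureUltralimit 𝒰 μ s ≤ measureUltralimit 𝒰 μ t :=
  le_of_tendsto_of_tendsto' (tendsto_measureUltralimit 𝒰 μ s)
    (tendsto_measureUltralimit 𝒰 μ t)
    fun _ => measure_mono h

theorem measureUltralimit_union_le (s t : Set X) :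
    measureUltralimit 𝒰 μ (s ∪ t) ≤ measureUltralimit 𝒰 μ s + measureUltralimit 𝒰 μ t :=
  le_of_tendsto_of_tendsto' (tendsto_measureUltralimit 𝒰 μ _)
    ((tendsto_measureUltralimit 𝒰 μ s).add (tendsto_measureUltralimit 𝒰 μ t))
    fun _ => measure_union_le s t

theorem measureUltralimit_union {s t : Set X} (hd : Disjoint s t) (ht : MeasurableSet t) :
    measureUltralimit 𝒰 μ (s ∪ t) = measureUltralimit 𝒰 μ s + measureUltralimit 𝒰 μ t :=
  tendsto_nhds_unique (tendsto_measureUltralimit 𝒰 μ _)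
    (((tendsto_measureUltralimit 𝒰 μ s).add (tendsto_measureUltralimit 𝒰 μ t)).congr
      fun _ => (measure_union hd ht).symm)

theorem measureUltralimit_univ [∀ a, IsProbabilityMeasure (μ a)] :
    measureUltralimit 𝒰 μ univ = 1 :=
  tendsto_nhds_unique (tendsto_measureUltralimit 𝒰 μ univ) (by simp)

theorem measureUltralimit_ne_top [∀ a, IsProbabilityMeasure (μ a)] (s : Set X) :
    measureUltralimit 𝒰 μ s ≠ ∞ :=
  ((measureUltralimit_mono 𝒰 μ (subset_univ s)).trans_eq
    (measureUltralimit_univ 𝒰 μ)).trans_lt ENNReal.one_lt_top |>.ne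

variable [TopologicalSpace X] [OpensMeasurableSpace X] [∀ a, IsProbabilityMeasure (μ a)]

noncomputable def ultralimitContent : Content X where
  toFun K := (measureUltralimit 𝒰 μ K).toNNReal
  mono' _ _ h :=
    ENNReal.toNNReal_mono (measureUltralimit_ne_top 𝒰 μ _) (measureUltralimit_mono 𝒰 μ h)
  sup_disjoint' _ _ hd _ h₂ := by
    rw [Compacts.coe_sup, measureUltralimit_union 𝒰 μ hd h₂.measurableSet,
      ENNReal.toNNReal_add (measureUltralimit_ne_top 𝒰 μ _) (measureUltralimit_ne_top 𝒰 μ _)]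
  sup_le' _ _ := by
    rw [Compacts.coe_sup, ← ENNReal.toNNReal_add (measureUltralimit_ne_top 𝒰 μ _)
      (measureUltralimit_ne_top 𝒰 μ _)]
    exact ENNReal.toNNReal_mono
      (ENNReal.add_ne_top.2 ⟨measureUltralimit_ne_top 𝒰 μ _, measureUltralimit_ne_top 𝒰 μ _⟩)
      (measureUltralimit_union_le 𝒰 μ _ _)

theorem ultralimitContent_apply (K : Compacts X) :
    ultralimitContent 𝒰 μ K = measureUltralimit 𝒰 μ K :=
  ENNReal.coe_toNNReal (measureUltralimit_ne_top 𝒰 μ _)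

variable [R1Space X] [BorelSpace X]

theorem ultralimitContent_measure_le {U : Set X} (hU : IsOpen U) :
    (ultralimitContent 𝒰 μ).measure U ≤ measureUltralimit 𝒰 μ U := by
  rw [Content.measure_apply _ hU.measurableSet, Content.outerMeasure_of_isOpen _ U hU]
  exact iSup₂_le fun K hK =>
    (ultralimitContent_apply 𝒰 μ K).trans_le (measureUltralimit_mono 𝒰 μ hK)

theorem ultralimitContent_measure_univ [CompactSpace X] :
    (ultralimitContent 𝒰 μ).measure univ = 1 := by
  have hcontent : ultralimitContent 𝒰 μ ⟨univ, isCompact_univ⟩ = 1 :=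
    (ultralimitContent_apply 𝒰 μ _).trans (measureUltralimit_univ 𝒰 μ)
  rw [Content.measure_apply _ MeasurableSet.univ]
  refine le_antisymm ?_ ?_
  · exact ((ultralimitContent 𝒰 μ).outerMeasure_le ⊤ ⟨univ, isCompact_univ⟩ subset_rfl).trans
      hcontent.le
  · exact hcontent.ge.trans ((ultralimitContent 𝒰 μ).le_outerMeasure_compacts _)

end Ultralimit

theorem exists_isProbabilityMeasure_regular_le_of_eventually_le {X α : Type*}
    [TopologicalSpace X] [CompactSpace X] [R1Space X] [MeasurableSpace X] [BorelSpace X]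
    (l : Filter α) [l.NeBot] (μ : α → Measure X) [∀ a, IsProbabilityMeasure (μ a)] :
    ∃ ν : Measure X, IsProbabilityMeasure ν ∧ ν.Regular ∧
      ∀ U, IsOpen U → ∀ c, (∀ᶠ a in l, μ a U ≤ c) → ν U ≤ c := by
  let 𝒰 := Ultrafilter.of l
  refine ⟨(ultralimitContent 𝒰 μ).measure, ⟨ultralimitContent_measure_univ 𝒰 μ⟩,
    inferInstance, fun U hU c hc => ?_⟩
  exact (ultralimitContent_measure_le 𝒰 μ hU).trans
    (le_of_tendsto (tendsto_measureUltralimit 𝒰 μ U) (hc.filter_mono (Ultrafilter.of_le l)))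

section BinaryTree

variable {X ι : Type*} [MeasurableSpace X] (p : ι → X) (c : ι → Bool → ι)

/-- The uniform probability measure on the points `p j` of the depth-`n` descendants `j` of `i`
in the binary tree with children `c i false` and `c i true`. -/
noncomputable def binaryTreeMeasure : ℕ → ι → Measure X
  | 0, i => Measure.dirac (p i)
  | n + 1, i => (2⁻¹ : ℝ≥0∞) • (binaryTreeMeasure n (c i false) + binaryTreeMeasure n (c i true))

theorem binaryTreeMeasure_succ (n : ℕ) (i : ι) (b : Bool) :
    binaryTreeMeasure p c (n + 1) i =
      (2⁻¹ : ℝ≥0∞) • (binaryTreeMeasure p c n (c i b) + binaryTreeMeasure p c n (c i !b)) := by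
  cases b
  · rfl
  · rw [binaryTreeMeasure, add_comm, Bool.not_true]

instance (n : ℕ) (i : ι) : IsProbabilityMeasure (binaryTreeMeasure p c n i) := by
  induction n generalizing i with
  | zero => exact Measure.dirac.isProbabilityMeasure
  | succ n ih =>
    constructor
    rw [binaryTreeMeasure, Measure.smul_apply, Measure.add_apply, measure_univ, measure_univ,
      one_add_one_eq_two, smul_eq_mul, ENNReal.inv_mul_cancel two_ne_zero ENNReal.ofNat_ne_top]

variable {F : ι → Set X} (hp : ∀ i, p i ∈ F i) (hc : ∀ i b, F (c i b) ⊆ F i)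
include hp hc

theorem binaryTreeMeasure_compl_eq_zero (hF : ∀ i, MeasurableSet (F i)) (n : ℕ) (i : ι) :
    binaryTreeMeasure p c n i (F i)ᶜ = 0 := by
  induction n generalizing i with
  | zero => simp [binaryTreeMeasure, Measure.dirac_apply' _ (hF i).compl, hp i]
  | succ n ih =>
    have hchild (b : Bool) : binaryTreeMeasure p c n (c i b) (F i)ᶜ = 0 :=
      measure_mono_null (compl_subset_compl.2 (hc i b)) (ih (c i b))
    simp [binaryTreeMeasure, hchild]

theorem exists_isOpen_binaryTreeMeasure_le [TopologicalSpace X] [OpensMeasurableSpace X]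
    (hF : ∀ i, IsClosed (F i)) (hd : ∀ i, Disjoint (F (c i false)) (F (c i true))) (x : X)
    (m : ℕ) (i : ι) :
    ∃ U, IsOpen U ∧ x ∈ U ∧ ∀ n ≥ m, binaryTreeMeasure p c n i U ≤ 2⁻¹ ^ m := by
  induction m generalizing i with
  | zero => exact ⟨univ, isOpen_univ, mem_univ x, fun n _ => by simp⟩
  | succ m ih =>
    obtain ⟨b, hxb⟩ : ∃ b, x ∉ F (c i !b) := by
      by_cases hx : x ∈ F (c i false)
      · exact ⟨false, (hd i).notMem_of_mem_left hx⟩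
      · exact ⟨true, hx⟩
    obtain ⟨V, hV, hxV, hVle⟩ := ih (c i b)
    refine ⟨V ∩ (F (c i !b))ᶜ, hV.inter (hF _).isOpen_compl, ⟨hxV, hxb⟩, fun n hn => ?_⟩
    obtain ⟨k, rfl⟩ : ∃ k, n = k + 1 := ⟨n - 1, by omega⟩
    have hnull : binaryTreeMeasure p c k (c i !b) (V ∩ (F (c i !b))ᶜ) = 0 :=
      measure_mono_null inter_subset_right
        (binaryTreeMeasure_compl_eq_zero p c hp hc (fun j => (hF j).measurableSet) k _)
    calc binaryTreeMeasure p c (k + 1) i (V ∩ (F (c i !b))ᶜ)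
        = 2⁻¹ * binaryTreeMeasure p c k (c i b) (V ∩ (F (c i !b))ᶜ) := by
          rw [binaryTreeMeasure_succ p c k i b, Measure.smul_apply, Measure.add_apply, hnull,
            add_zero, smul_eq_mul]
      _ ≤ 2⁻¹ * 2⁻¹ ^ m := by
          gcongr
          exact (measure_mono inter_subset_left).trans (hVle k (by omega))
      _ = 2⁻¹ ^ (m + 1) := (pow_succ' _ _).symm

end BinaryTree

theorem exists_isProbabilityMeasure_regular_nullSingletonClass_of_splitting {X : Type*}
    [TopologicalSpace X] [CompactSpace X] [R1Space X] [MeasurableSpace X] [BorelSpace X]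
    {𝒞 : Set (Set X)} (h𝒞 : 𝒞.Nonempty) (hclosed : ∀ F ∈ 𝒞, IsClosed F)
    (hne : ∀ F ∈ 𝒞, F.Nonempty)
    (hsplit : ∀ F ∈ 𝒞, ∃ F₁ ∈ 𝒞, ∃ F₂ ∈ 𝒞, F₁ ⊆ F ∧ F₂ ⊆ F ∧ Disjoint F₁ F₂) :
    ∃ μ : Measure X, IsProbabilityMeasure μ ∧ μ.Regular ∧ NullSingletonClass μ := by
  choose F₁ hF₁ F₂ hF₂ hF₁F hF₂F hdisj using hsplit
  let c (F : 𝒞) (b : Bool) : 𝒞 := bif b then ⟨F₂ F F.2, hF₂ F F.2⟩ else ⟨F₁ F F.2, hF₁ F F.2⟩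
  have hc (F : 𝒞) (b : Bool) : (c F b : Set X) ⊆ F := by
    cases b
    exacts [hF₁F F F.2, hF₂F F F.2]
  let p (F : 𝒞) : X := (hne F F.2).some
  let root : 𝒞 := ⟨_, h𝒞.some_mem⟩
  obtain ⟨μ, hμ, hreg, hle⟩ := exists_isProbabilityMeasure_regular_le_of_eventually_le atTop
    fun n => binaryTreeMeasure p c n root
  refine ⟨μ, hμ, hreg, ⟨fun x => ?_⟩⟩
  have hsmall (m : ℕ) : μ {x} ≤ 2⁻¹ ^ m := by
    obtain ⟨U, hU, hxU, hUle⟩ := exists_isOpen_binaryTreeMeasure_le p c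
      (fun F => (hne F F.2).some_mem) hc (fun F => hclosed F F.2) (fun F => hdisj F F.2) x m root
    exact (measure_mono (singleton_subset_iff.2 hxU)).trans
      (hle U hU _ (eventually_atTop.2 ⟨m, hUle⟩))
  exact nonpos_iff_eq_zero.1 <| ge_of_tendsto'
    (ENNReal.tendsto_pow_atTop_nhds_zero_of_lt_one (by norm_num)) hsmall

theorem Preperfect.exists_isProbabilityMeasure_regular_nullSingletonClass {X : Type*}
    [TopologicalSpace X] [CompactSpace X] [T2Space X] [MeasurableSpace X] [BorelSpace X]
    {S : Set X} (hS : Preperfect S) (hne : S.Nonempty) :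
    ∃ μ : Measure X, IsProbabilityMeasure μ ∧ μ.Regular ∧ NullSingletonClass μ := by
  refine exists_isProbabilityMeasure_regular_nullSingletonClass_of_splitting
    (𝒞 := {F | IsClosed F ∧ ∃ x ∈ S, F ∈ 𝓝 x}) ⟨univ, isClosed_univ, hne.some, hne.some_mem,
      univ_mem⟩ (fun F hF => hF.1) (fun F ⟨_, x, _, hFx⟩ => ⟨x, mem_of_mem_nhds hFx⟩) ?_
  rintro F ⟨hF, x, hxS, hFx⟩
  obtain ⟨y, ⟨hyF, hyS⟩, hyx⟩ :=
    accPt_iff_nhds.1 (hS x hxS) (interior F) (interior_mem_nhds.2 hFx)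
  obtain ⟨A, ⟨hA, hA_closed⟩, B, ⟨hB, hB_closed⟩, hAB⟩ :=
    ((closed_nhds_basis x).disjoint_iff (closed_nhds_basis y)).1
      (disjoint_nhds_nhds.2 hyx.symm)
  exact ⟨F ∩ A, ⟨hF.inter hA_closed, x, hxS, inter_mem hFx hA⟩,
    F ∩ B, ⟨hF.inter hB_closed, y, hyS, inter_mem (mem_interior_iff_mem_nhds.1 hyF) hB⟩,
    inter_subset_left, inter_subset_left, hAB.mono inter_subset_right inter_subset_right⟩

/-- A compact Hausdorff topological space carries a diffuse (atomless) regular Borel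
probability measure if and only if it contains a nonempty perfect subset. -/
theorem compact_hausdorff_exists_diffuse_regular_prob_iff_perfect
    (X : Type*) [TopologicalSpace X] [CompactSpace X] [T2Space X]
    [MeasurableSpace X] [BorelSpace X] :
    (∃ μ : Measure X, IsProbabilityMeasure μ ∧ μ.Regular ∧ ∀ x : X, μ {x} = 0) ↔
      (∃ S : Set X, S.Nonempty ∧ Perfect S) := by
  constructor
  · rintro ⟨μ, hμ, hreg, hdiff⟩
    have : NullSingletonClass μ := ⟨hdiff⟩
    exact ⟨μ.support, Measure.nonempty_support_of_regular (IsProbabilityMeasure.ne_zero μ),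
      Measure.isClosed_support, Measure.preperfect_support⟩
  · rintro ⟨S, hne, hS⟩
    obtain ⟨μ, hμ, hreg, hdiff⟩ :=
      hS.acc.exists_isProbabilityMeasure_regular_nullSingletonClass hne
    exact ⟨μ, hμ, hreg, hdiff.measure_singleton⟩
end

section
/- If X is a Banach space and (x_i) is a net in X which converges weak-* (in X**) to an element x ∈ X**, then inf { ‖y‖ : y ∈ conv({x_i}) } ≤ ‖x‖, where conv denotes the convex hull. -/
/-!
If every point of a convex set `s` has norm at least `r`, Hahn–Banach separates `s` from the open
ball of radius `r` by a functional `f` of norm at most one that is at least `r` on `s`. Along a net in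
`s` converging weak-* to `Φ`, the values of this functional converge to `Φ f ≤ ‖Φ‖`, so `r ≤ ‖Φ‖`.
-/

open NormedSpace Filter Metric

section

variable {E : Type*} [NormedAddCommGroup E] [NormedSpace ℝ E]

theorem StrongDual.norm_le_div_of_forall_mem_ball_lt {f : StrongDual ℝ E} {r u : ℝ} (hr : 0 < r)
    (hf : ∀ z ∈ ball (0 : E) r, f z < u) : ‖f‖ ≤ u / r := by
  have hle : closedBall (0 : E) r ⊆ {z | f z ≤ u} := by
    rw [← closure_ball (0 : E) hr.ne']
    exact closure_minimal (fun z hz => (hf z hz).le) (isClosed_le f.continuous continuous_const)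
  refine ContinuousLinearMap.opNorm_bound_of_ball_bound hr u f fun z hz => ?_
  have hneg : f (-z) ≤ u :=
    hle (by rwa [mem_closedBall_zero_iff, norm_neg, ← mem_closedBall_zero_iff])
  rw [map_neg] at hneg
  exact abs_le.2 ⟨by linarith, hle hz⟩

theorem Convex.exists_norm_le_one_forall_le_apply {s : Set E} (hs : Convex ℝ s) {r : ℝ}
    (hr : ∀ y ∈ s, r ≤ ‖y‖) : ∃ f : StrongDual ℝ E, ‖f‖ ≤ 1 ∧ ∀ y ∈ s, r ≤ f y := by
  rcases le_or_gt r 0 with hr0 | hr0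
  · exact ⟨0, by simp, fun y _ => by simpa using hr0⟩
  have hdisj : Disjoint (ball (0 : E) r) s :=
    Set.disjoint_left.2 fun y hy hys => (hr y hys).not_gt (mem_ball_zero_iff.1 hy)
  obtain ⟨f, u, hball, hsep⟩ := geometric_hahn_banach_open (convex_ball 0 r) isOpen_ball hs hdisj
  have hu : 0 < u := by simpa using hball 0 (mem_ball_self hr0)
  have hf : ‖f‖ ≤ u / r := StrongDual.norm_le_div_of_forall_mem_ball_lt hr0 hball
  refine ⟨(r / u) • f, ?_, fun y hy => ?_⟩
  · calc ‖(r / u) • f‖ = r / u * ‖f‖ := by rw [norm_smul, Real.norm_of_nonneg (by positivity)]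
      _ ≤ r / u * (u / r) := by gcongr
      _ = 1 := by field_simp
  · calc r = r / u * u := by field_simp
      _ ≤ r / u * f y := by gcongr; exact hsep y hy
      _ = ((r / u) • f) y := rfl

end

theorem sInf_norm_convexHull_le_of_weakStar_tendsto_general
    (X : Type*) [NormedAddCommGroup X] [NormedSpace ℝ X]
    {ι : Type*} (l : Filter ι) [l.NeBot] (x : ι → X)
    (Φ : StrongDual ℝ (StrongDual ℝ X))
    (hconv : Tendsto (fun i => StrongDual.toWeakDual (inclusionInDoubleDual ℝ X (x i))) l
      (nhds (StrongDual.toWeakDual Φ))) :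
    sInf ((fun y => ‖y‖) '' (convexHull ℝ (Set.range x))) ≤ ‖Φ‖ := by
  refine le_of_forall_lt_imp_le_of_dense fun r hr => ?_
  have hnorm : ∀ y ∈ convexHull ℝ (Set.range x), r ≤ ‖y‖ := fun y hy =>
    hr.le.trans <| csInf_le ⟨0, by rintro _ ⟨z, _, rfl⟩; exact norm_nonneg z⟩ ⟨y, hy, rfl⟩
  obtain ⟨f, hf1, hf⟩ := (convex_convexHull ℝ _).exists_norm_le_one_forall_le_apply hnorm
  have hlim : Tendsto (fun i => f (x i)) l (nhds (Φ f)) :=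
    ((WeakDual.eval_continuous f).tendsto _).comp hconv
  calc r ≤ Φ f := ge_of_tendsto hlim (Eventually.of_forall fun i =>
          hf _ (subset_convexHull ℝ _ ⟨i, rfl⟩))
    _ ≤ ‖Φ‖ * ‖f‖ := (le_abs_self _).trans (Φ.le_opNorm f)
    _ ≤ ‖Φ‖ := mul_le_of_le_one_right (norm_nonneg Φ) hf1

/-- If `X` is a Banach space and `(x i)` is a net in `X` which converges weak-*
(in the bidual `X**`) to an element `Φ ∈ X**`, then
`inf { ‖y‖ : y ∈ conv {x i} } ≤ ‖Φ‖`. -/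
theorem sInf_norm_convexHull_le_of_weakStar_tendsto
    (X : Type*) [NormedAddCommGroup X] [NormedSpace ℝ X] [CompleteSpace X]
    {ι : Type*} (l : Filter ι) [l.NeBot] (x : ι → X)
    (Φ : StrongDual ℝ (StrongDual ℝ X))
    (hconv : Tendsto (fun i => StrongDual.toWeakDual (inclusionInDoubleDual ℝ X (x i))) l
      (nhds (StrongDual.toWeakDual Φ))) :
    sInf ((fun y => ‖y‖) '' (convexHull ℝ (Set.range x))) ≤ ‖Φ‖ :=
  sInf_norm_convexHull_le_of_weakStar_tendsto_general X l x Φ hconv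
end

section
/- Let Γ be a group acting continuously on a compact Hausdorff space K and let η be a regular Borel probability measure on K. Then the set ∂_η Γ of η-proximal points in the Stone–Čech compactification ΔΓ is invariant under both the left and right actions of Γ on ΔΓ. -/
open Filter MeasureTheory Topology

/-- The set of `η`-proximal points in the Stone–Čech compactification of the
discrete group `Γ` acting (via `act`) on the compact space `K`. -/
def proximalSet {Γ : Type*} [Group Γ] [TopologicalSpace Γ] {K : Type*}
    [TopologicalSpace K] [MeasurableSpace K]
    (act : Γ → K → K) (η : MeasureTheory.Measure K) : Set (StoneCech Γ) :=
  {ω | ∀ h : Γ, ∀ f : C(K, ℝ),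
    Tendsto
      (fun g : Γ =>
        (∫ x, f x ∂(Measure.map (act (g * h)) η)) - ∫ x, f x ∂(Measure.map (act g) η))
      (Filter.comap stoneCechUnit (nhds ω)) (nhds 0)}

/-- The left translation action of `Γ` on its Stone–Čech compactification, obtained by
continuously extending `g ↦ s * g`. -/
noncomputable def leftTrans {Γ : Type*} [Group Γ] [TopologicalSpace Γ] [DiscreteTopology Γ]
    (s : Γ) : StoneCech Γ → StoneCech Γ :=
  stoneCechExtend (continuous_of_discreteTopology (f := fun g => stoneCechUnit (s * g)))

/-- The right translation action of `Γ` on its Stone–Čech compactification, obtained by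
continuously extending `g ↦ g * s`. -/
noncomputable def rightTrans {Γ : Type*} [Group Γ] [TopologicalSpace Γ] [DiscreteTopology Γ]
    (s : Γ) : StoneCech Γ → StoneCech Γ :=
  stoneCechExtend (continuous_of_discreteTopology (f := fun g => stoneCechUnit (g * s)))

/-- Auxiliary: if `T`, `S` are continuous maps on `ΔΓ` extending mutually inverse maps
`φ`, `ψ` of `Γ`, then the comap filter at `T ω` is finer than the pushforward along `φ`
of the comap filter at `ω`. -/
lemma comap_nhds_extend_le {Γ : Type*} [TopologicalSpace Γ] {φ ψ : Γ → Γ}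
    (h₁ : φ ∘ ψ = id) (h₂ : ψ ∘ φ = id)
    {T S : StoneCech Γ → StoneCech Γ} (hTc : Continuous T) (hSc : Continuous S)
    (hT : ∀ g, T (stoneCechUnit g) = stoneCechUnit (φ g))
    (hS : ∀ g, S (stoneCechUnit g) = stoneCechUnit (ψ g))
    (ω : StoneCech Γ) :
    Filter.comap stoneCechUnit (nhds (T ω))
      ≤ Filter.map φ (Filter.comap stoneCechUnit (nhds ω)) := by
  have hST : S ∘ T = id := by
    apply denseRange_stoneCechUnit.equalizer (hSc.comp hTc) continuous_id
    funext g
    simp only [Function.comp_apply, id_eq, hT, hS]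
    exact congrArg stoneCechUnit (congrFun h₂ g)
  have hSTω : S (T ω) = ω := congrFun hST ω
  rw [Filter.map_eq_comap_of_inverse h₁ h₂]
  have hcomp : (stoneCechUnit ∘ ψ : Γ → StoneCech Γ) = S ∘ stoneCechUnit := by
    funext g; simp [hS]
  calc Filter.comap stoneCechUnit (nhds (T ω))
      ≤ Filter.comap stoneCechUnit (Filter.comap S (nhds ω)) := by
        apply Filter.comap_mono
        rw [← tendsto_iff_comap]
        have := hSc.tendsto (T ω)
        rwa [hSTω] at this
    _ = Filter.comap ψ (Filter.comap stoneCechUnit (nhds ω)) := by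
        rw [Filter.comap_comap, Filter.comap_comap, ← hcomp]

/-- For a continuous action of a discrete group `Γ` on a compact Hausdorff space `K` and a
regular Borel probability measure `η` on `K`, the set `∂_η Γ` of `η`-proximal points is
invariant under both the left and the right translation actions of `Γ` on `ΔΓ`. -/
theorem proximalSet_left_right_invariant
    (Γ : Type*) [Group Γ] [TopologicalSpace Γ] [DiscreteTopology Γ]
    (K : Type*) [TopologicalSpace K] [CompactSpace K] [T2Space K]
    [MeasurableSpace K] [BorelSpace K]
    (act : Γ → K → K) (hact : ∀ g, Continuous (act g))
    (hone : act 1 = id) (hmul : ∀ g h, act (g * h) = act g ∘ act h)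
    (η : MeasureTheory.Measure K) [IsProbabilityMeasure η] (hreg : η.Regular) :
    ∀ s : Γ, ∀ ω ∈ proximalSet act η,
      leftTrans s ω ∈ proximalSet act η ∧ rightTrans s ω ∈ proximalSet act η := by
  intro s ω hω
  constructor
  · -- left invariance
    intro h f
    have hle := comap_nhds_extend_le (φ := fun g => s * g) (ψ := fun g => s⁻¹ * g)
      (funext fun g => by simp) (funext fun g => by simp)
      (continuous_stoneCechExtend _) (continuous_stoneCechExtend _)
      (T := leftTrans s) (S := leftTrans s⁻¹)
      (fun g => congrFun (stoneCechExtend_extends _) g)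
      (fun g => congrFun (stoneCechExtend_extends _) g) ω
    refine Tendsto.mono_left ?_ hle
    rw [Filter.tendsto_map'_iff]
    have key := hω h (f.comp ⟨act s, hact s⟩)
    have hint : ∀ u : Γ, ∫ x, f x ∂(Measure.map (act (s * u)) η)
        = ∫ x, (f.comp ⟨act s, hact s⟩) x ∂(Measure.map (act u) η) := by
      intro u
      rw [hmul s u, ← Measure.map_map (hact s).measurable (hact u).measurable,
        integral_map (hact s).measurable.aemeasurable
          f.continuous.measurable.aestronglyMeasurable]
      rfl
    convert key using 2 with g
    simp only [Function.comp_apply]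
    rw [mul_assoc, hint (g * h), hint g]
  · -- right invariance
    intro h f
    have hle := comap_nhds_extend_le (φ := fun g => g * s) (ψ := fun g => g * s⁻¹)
      (funext fun g => by simp) (funext fun g => by simp)
      (continuous_stoneCechExtend _) (continuous_stoneCechExtend _)
      (T := rightTrans s) (S := rightTrans s⁻¹)
      (fun g => congrFun (stoneCechExtend_extends _) g)
      (fun g => congrFun (stoneCechExtend_extends _) g) ω
    refine Tendsto.mono_left ?_ hle
    rw [Filter.tendsto_map'_iff]
    have h1 := hω (s * h) f
    have h2 := hω s f
    have key := h1.sub h2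
    rw [sub_zero] at key
    convert key using 2 with g
    simp only [Function.comp_apply]
    rw [mul_assoc]
    ring
end

section
/- Let Γ be a group with a continuous action on a compact Hausdorff space K and η ∈ Prob(K) not Γ-invariant, and set X = ∂_η Γ. Then there is a unital positive linear map θ: C(K) → C(X) such that θ(g·f) = λ_g(θ(f)) and ρ_g(θ(f)) = θ(f) for all g ∈ Γ and f ∈ C(K), where λ and ρ denote the left and right Γ-actions on C(X) induced by the left and right actions on X. -/
open Filter MeasureTheory Topology

section Proof

variable {Γ : Type*} [Group Γ] [TopologicalSpace Γ] [DiscreteTopology Γ]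
  {K : Type*} [TopologicalSpace K] [CompactSpace K] [T2Space K]
  [MeasurableSpace K] [BorelSpace K]

theorem leftTrans_unit (s g : Γ) : leftTrans s (stoneCechUnit g) = stoneCechUnit (s * g) :=
  congrFun (stoneCechExtend_extends _) g

theorem rightTrans_unit (s g : Γ) : rightTrans s (stoneCechUnit g) = stoneCechUnit (g * s) :=
  congrFun (stoneCechExtend_extends _) g

variable (act : Γ → K → K) (η : MeasureTheory.Measure K) [IsProbabilityMeasure η]

/-- The basic function `g ↦ ∫ f d(g·η)`. -/
noncomputable def baseFun (f : C(K, ℝ)) (g : Γ) : ℝ :=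
  ∫ x, f x ∂(Measure.map (act g) η)

theorem baseFun_mem (hact : ∀ g, Continuous (act g)) (f : C(K, ℝ)) (g : Γ) :
    baseFun act η f g ∈ Set.Icc (-‖f‖) ‖f‖ := by
  haveI : IsProbabilityMeasure (Measure.map (act g) η) :=
    Measure.isProbabilityMeasure_map (hact g).measurable.aemeasurable
  have h : ‖∫ x, f x ∂(Measure.map (act g) η)‖ ≤ ‖f‖ * ((Measure.map (act g) η) Set.univ).toReal := by
    apply norm_integral_le_of_norm_le_const
    filter_upwards with x
    exact f.norm_coe_le_norm x
  rw [measure_univ, ENNReal.toReal_one, mul_one] at h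
  have h' : |baseFun act η f g| ≤ ‖f‖ := by simpa [baseFun, Real.norm_eq_abs] using h
  exact ⟨neg_le_of_abs_le h', le_of_abs_le h'⟩

/-- Auxiliary extension of `baseFun` into a compact interval. -/
noncomputable def thetaAux (hact : ∀ g, Continuous (act g)) (f : C(K, ℝ)) :
    StoneCech Γ → Set.Icc (-‖f‖) ‖f‖ :=
  stoneCechExtend (continuous_of_discreteTopology
    (f := fun g => (⟨baseFun act η f g, baseFun_mem act η hact f g⟩ :
      Set.Icc (-‖f‖) ‖f‖)))

/-- The extension of `baseFun` to the Stone–Čech compactification. -/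
noncomputable def thetaFun (hact : ∀ g, Continuous (act g)) (f : C(K, ℝ)) :
    StoneCech Γ → ℝ :=
  fun ω => (thetaAux act η hact f ω : ℝ)

theorem thetaFun_continuous (hact : ∀ g, Continuous (act g)) (f : C(K, ℝ)) :
    Continuous (thetaFun act η hact f) :=
  continuous_subtype_val.comp (continuous_stoneCechExtend _)

theorem thetaFun_unit (hact : ∀ g, Continuous (act g)) (f : C(K, ℝ)) (g : Γ) :
    thetaFun act η hact f (stoneCechUnit g) = baseFun act η f g :=
  congrArg Subtype.val (congrFun (stoneCechExtend_extends _) g)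

theorem thetaFun_eq_of_baseFun_eq (hact : ∀ g, Continuous (act g)) (f : C(K, ℝ))
    {u : StoneCech Γ → ℝ} (hu : Continuous u)
    (h : ∀ g : Γ, u (stoneCechUnit g) = baseFun act η f g) :
    thetaFun act η hact f = u := by
  apply denseRange_stoneCechUnit.equalizer (thetaFun_continuous act η hact f) hu
  funext g
  simp only [Function.comp_apply, thetaFun_unit, h]

theorem integrable_cont (f : C(K, ℝ)) (μ : Measure K) [IsFiniteMeasure μ] :
    Integrable (fun x => f x) μ :=
  f.continuous.integrable_of_hasCompactSupport (HasCompactSupport.of_compactSpace _)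

end Proof

section Proof2

variable {Γ : Type*} [Group Γ] [TopologicalSpace Γ] [DiscreteTopology Γ]
  {K : Type*} [TopologicalSpace K] [CompactSpace K] [T2Space K]
  [MeasurableSpace K] [BorelSpace K]
  (act : Γ → K → K) (η : MeasureTheory.Measure K) [IsProbabilityMeasure η]

theorem thetaFun_add (hact : ∀ g, Continuous (act g)) (f f' : C(K, ℝ)) :
    thetaFun act η hact (f + f') =
      fun ω => thetaFun act η hact f ω + thetaFun act η hact f' ω := by
  apply thetaFun_eq_of_baseFun_eq
  · exact (thetaFun_continuous act η hact f).add (thetaFun_continuous act η hact f')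
  · intro g
    haveI : IsProbabilityMeasure (Measure.map (act g) η) :=
      Measure.isProbabilityMeasure_map (hact g).measurable.aemeasurable
    simp only [thetaFun_unit, baseFun, ContinuousMap.add_apply]
    exact (integral_add (integrable_cont f (Measure.map (act g) η))
      (integrable_cont f' (Measure.map (act g) η))).symm

theorem thetaFun_smul (hact : ∀ g, Continuous (act g)) (c : ℝ) (f : C(K, ℝ)) :
    thetaFun act η hact (c • f) = fun ω => c * thetaFun act η hact f ω := by
  apply thetaFun_eq_of_baseFun_eq
  · exact continuous_const.mul (thetaFun_continuous act η hact f)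
  · intro g
    simp only [thetaFun_unit, baseFun, ContinuousMap.coe_smul, Pi.smul_apply, smul_eq_mul]
    simpa [smul_eq_mul] using
      (integral_smul (μ := Measure.map (act g) η) c (fun x => f x)).symm

theorem thetaFun_one (hact : ∀ g, Continuous (act g)) :
    thetaFun act η hact 1 = fun _ => 1 := by
  apply thetaFun_eq_of_baseFun_eq
  · exact continuous_const
  · intro g
    haveI : IsProbabilityMeasure (Measure.map (act g) η) :=
      Measure.isProbabilityMeasure_map (hact g).measurable.aemeasurable
    simp [baseFun]

theorem thetaFun_nonneg (hact : ∀ g, Continuous (act g)) (f : C(K, ℝ)) (hf : 0 ≤ f)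
    (ω : StoneCech Γ) : 0 ≤ thetaFun act η hact f ω := by
  have hcl : IsClosed {ω : StoneCech Γ | 0 ≤ thetaFun act η hact f ω} :=
    isClosed_le continuous_const (thetaFun_continuous act η hact f)
  have hsub : Set.range (stoneCechUnit : Γ → StoneCech Γ) ⊆
      {ω : StoneCech Γ | 0 ≤ thetaFun act η hact f ω} := by
    rintro _ ⟨g, rfl⟩
    simp only [Set.mem_setOf_eq, thetaFun_unit]
    exact integral_nonneg fun x => hf x
  have := hcl.closure_subset_iff.mpr hsub
  exact this (denseRange_stoneCechUnit ω)

theorem thetaFun_comp (hact : ∀ g, Continuous (act g))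
    (hmul : ∀ g h, act (g * h) = act g ∘ act h) (s : Γ) (f : C(K, ℝ)) :
    thetaFun act η hact (f.comp ⟨act s, hact s⟩) =
      fun ω => thetaFun act η hact f (leftTrans s ω) := by
  apply thetaFun_eq_of_baseFun_eq
  · exact (thetaFun_continuous act η hact f).comp (continuous_stoneCechExtend _)
  · intro g
    show thetaFun act η hact f (leftTrans s (stoneCechUnit g))
        = baseFun act η (f.comp ⟨act s, hact s⟩) g
    rw [leftTrans_unit, thetaFun_unit]
    simp only [baseFun, ContinuousMap.comp_apply, ContinuousMap.coe_mk,
      ContinuousMap.coe_comp, Function.comp_apply]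
    rw [← MeasureTheory.integral_map (μ := Measure.map (act g) η)
      (hact s).measurable.aemeasurable f.continuous.aestronglyMeasurable,
      Measure.map_map (hact s).measurable (hact g).measurable, ← hmul s g]

end Proof2

/-- If the discrete group `Γ` acts continuously on the compact Hausdorff space `K` and the
regular Borel probability measure `η` on `K` is not `Γ`-invariant, then, with
`X = ∂_η Γ`, there is a unital positive linear map `θ : C(K) → C(X)` which is
left-`Γ`-equivariant and whose range consists of right-`Γ`-invariant functions:
`θ(g·f) = λ_g (θ f)` and `ρ_g (θ f) = θ f` for all `g ∈ Γ`, `f ∈ C(K)`. -/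
theorem exists_equivariant_unital_positive_map_to_proximal_piece
    (Γ : Type*) [Group Γ] [TopologicalSpace Γ] [DiscreteTopology Γ]
    (K : Type*) [TopologicalSpace K] [CompactSpace K] [T2Space K]
    [MeasurableSpace K] [BorelSpace K]
    (act : Γ → K → K) (hact : ∀ g, Continuous (act g))
    (hone : act 1 = id) (hmul : ∀ g h, act (g * h) = act g ∘ act h)
    (η : MeasureTheory.Measure K) [IsProbabilityMeasure η] (hreg : η.Regular)
    (hninv : ¬ ∀ g : Γ, Measure.map (act g) η = η) :
    ∃ θ : C(K, ℝ) →ₗ[ℝ] C(↥(proximalSet act η), ℝ),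
      θ 1 = 1 ∧
      (∀ f : C(K, ℝ), 0 ≤ f → 0 ≤ θ f) ∧
      (∀ (g : Γ) (f : C(K, ℝ)) (ω : StoneCech Γ) (hω : ω ∈ proximalSet act η)
          (hω' : leftTrans g⁻¹ ω ∈ proximalSet act η),
        θ (f.comp ⟨act g⁻¹, hact g⁻¹⟩) ⟨ω, hω⟩ = θ f ⟨leftTrans g⁻¹ ω, hω'⟩) ∧
      (∀ (g : Γ) (f : C(K, ℝ)) (ω : StoneCech Γ) (hω : ω ∈ proximalSet act η)
          (hω' : rightTrans g ω ∈ proximalSet act η),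
        θ f ⟨rightTrans g ω, hω'⟩ = θ f ⟨ω, hω⟩) := by
  classical
  refine ⟨{ toFun := fun f => ⟨fun x => thetaFun act η hact f x.1,
              (thetaFun_continuous act η hact f).comp continuous_subtype_val⟩,
            map_add' := ?_, map_smul' := ?_ }, ?_, ?_, ?_, ?_⟩
  · intro f f'
    ext x
    simp [thetaFun_add act η hact f f']
  · intro c f
    ext x
    simp [thetaFun_smul act η hact c f]
  · ext x
    simp [thetaFun_one act η hact]
  · intro f hf
    intro x
    simpa using thetaFun_nonneg act η hact f hf x.1
  · intro g f ω hω hω'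
    simp only [LinearMap.coe_mk, AddHom.coe_mk, ContinuousMap.coe_mk]
    rw [thetaFun_comp act η hact hmul g⁻¹ f]
  · intro g f ω hω hω'
    simp only [LinearMap.coe_mk, AddHom.coe_mk, ContinuousMap.coe_mk]
    set L := Filter.comap (stoneCechUnit : Γ → StoneCech Γ) (nhds ω) with hLdef
    haveI hL : L.NeBot := by
      rw [hLdef]
      refine Filter.comap_neBot fun t ht => ?_
      obtain ⟨x, hxt, g, rfl⟩ :=
        mem_closure_iff_nhds.mp (denseRange_stoneCechUnit ω) t ht
      exact ⟨g, hxt⟩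
    have hunit : Tendsto (stoneCechUnit : Γ → StoneCech Γ) L (nhds ω) := tendsto_comap
    have h1 : Tendsto (fun γ : Γ => baseFun act η f γ) L (nhds (thetaFun act η hact f ω)) := by
      have := ((thetaFun_continuous act η hact f).tendsto ω).comp hunit
      simp only [Function.comp_def, thetaFun_unit] at this
      exact this
    have hrt : Continuous (rightTrans (Γ := Γ) g) := continuous_stoneCechExtend _
    have h2 : Tendsto (fun γ : Γ => baseFun act η f (γ * g)) L
        (nhds (thetaFun act η hact f (rightTrans g ω))) := by
      have := ((thetaFun_continuous act η hact f).tendsto (rightTrans g ω)).comp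
        ((hrt.tendsto ω).comp hunit)
      simp only [Function.comp_def, rightTrans_unit, thetaFun_unit] at this
      exact this
    have hprox : Tendsto (fun γ : Γ => baseFun act η f (γ * g) - baseFun act η f γ) L
        (nhds 0) := hω g f
    have h3 : Tendsto (fun γ : Γ => baseFun act η f (γ * g)) L
        (nhds (0 + thetaFun act η hact f ω)) := by
      have := hprox.add h1
      simpa using this
    rw [zero_add] at h3
    exact tendsto_nhds_unique h2 h3
end

section
/- Let A be a unital C*-algebra with a closed two-sided ideal I, and let Γ be a countable group acting on A by *-automorphisms preserving I. For any countable set I₀ ⊆ I there exists an increasing sequence (α_n) in I with 0 ≤ α_n ≤ 1 such that ‖(1 − α_n)a‖ → 0 for all a ∈ I₀ and ‖α_n − g·α_n‖ → 0 for all g ∈ Γ. -/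
/-!
It suffices to find `s ∈ I` with `0 ≤ s ≤ 1` which dominates every `a a⋆` (`a ∈ I₀`) up to a
constant and is quasi-invariant: `ρ g s ≤ C s` and `s ≤ C ρ g s` for some `C = C(g) ≥ 1`. Then
`αₙ = s ^ pₙ` with `pₙ ↓ 0` works: `‖(1 - s ^ p) a‖² ≤ M ‖(1 - s ^ p) s (1 - s ^ p)‖ ≤ M p`, and
since `t ↦ t ^ p` is operator monotone the quasi-invariance constants of `s ^ p` are `C ^ p → 1`.

To build `s`, take a positive `x ∈ I` dominating all `a a⋆` (a weighted sum), enumerate `Γ` as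
`(vₙ)`, and let `T = ∑ 2⁻⁽ⁿ⁺¹⁾ ρ(vₙ)`, so that `ρ(vₙ) ≤ 2ⁿ⁺¹ T` on positive elements. The Neumann
series `h = ∑ 2⁻ʲ Tʲ x` satisfies `h = x + T h / 2`, hence `x ≤ h` and `T h ≤ 2 h`, so
`ρ(vₙ) h ≤ 2ⁿ⁺² h`; normalising `h` gives `s`.
-/

open Filter Topology

lemma Real.mul_one_sub_rpow_le {t p : ℝ} (ht : 0 ≤ t) (hp : 0 ≤ p) : t * (1 - t ^ p) ≤ p := by
  rcases ht.eq_or_lt with rfl | ht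
  · simpa using hp
  have hexp : 1 + p * Real.log t ≤ t ^ p := by
    rw [Real.rpow_def_of_pos ht, mul_comm]
    linarith [Real.add_one_le_exp (Real.log t * p)]
  have hlog : t - 1 ≤ t * Real.log t := by
    have := mul_le_mul_of_nonneg_left (Real.one_sub_inv_le_log_of_pos ht) ht.le
    rwa [mul_sub, mul_one, mul_inv_cancel₀ ht.ne'] at this
  nlinarith

section Neumann

variable {E : Type*} [NormedAddCommGroup E] [NormedSpace ℝ E]

/-- `(1 - T / 2)⁻¹ x`. -/
noncomputable def neumannHalf (T : E →L[ℝ] E) (x : E) : E :=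
  ∑' j : ℕ, (1 / 2 : ℝ) ^ j • (T ^ j) x

lemma ContinuousLinearMap.norm_pow_apply_le {T : E →L[ℝ] E} (hT : ‖T‖ ≤ 1) (j : ℕ) (x : E) :
    ‖(T ^ j) x‖ ≤ ‖x‖ := by
  induction j with
  | zero => simp
  | succ j ih =>
    rw [pow_succ']
    exact (T.le_of_opNorm_le hT _).trans (by rw [one_mul]; exact ih)

lemma ContinuousLinearMap.pow_apply_nonneg [Preorder E] {T : E →L[ℝ] E}
    (hT : ∀ y, 0 ≤ y → 0 ≤ T y) (j : ℕ) {x : E} (hx : 0 ≤ x) : 0 ≤ (T ^ j) x := by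
  induction j with
  | zero => exact hx
  | succ j ih => rw [pow_succ']; exact hT _ ih

variable [CompleteSpace E]

lemma summable_neumannHalf {T : E →L[ℝ] E} (hT : ‖T‖ ≤ 1) (x : E) :
    Summable fun j : ℕ => (1 / 2 : ℝ) ^ j • (T ^ j) x := by
  refine .of_norm_bounded (summable_geometric_two.mul_right ‖x‖) fun j => ?_
  rw [norm_smul, Real.norm_of_nonneg (by positivity)]
  exact mul_le_mul_of_nonneg_left (T.norm_pow_apply_le hT j x) (by positivity)

lemma neumannHalf_eq {T : E →L[ℝ] E} (hT : ‖T‖ ≤ 1) (x : E) :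
    neumannHalf T x = x + (1 / 2 : ℝ) • T (neumannHalf T x) := by
  have hs := summable_neumannHalf hT x
  calc neumannHalf T x = x + ∑' j : ℕ, (1 / 2 : ℝ) ^ (j + 1) • (T ^ (j + 1)) x := by
        rw [neumannHalf, hs.tsum_eq_zero_add, pow_zero, pow_zero, one_smul]
        rfl
    _ = x + (1 / 2 : ℝ) • T (neumannHalf T x) := by
        rw [neumannHalf, T.map_tsum hs, ← tsum_const_smul'']
        congr 1
        refine tsum_congr fun j => ?_
        rw [map_smul, smul_smul, ← pow_succ']
        congr 1
        rw [pow_succ']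
        rfl

end Neumann

section Averaging

variable {E : Type*} [NormedAddCommGroup E] [NormedSpace ℝ E]

noncomputable def dyadicAverage (R : ℕ → E →L[ℝ] E) : E →L[ℝ] E :=
  ∑' n : ℕ, (1 / 2 : ℝ) ^ (n + 1) • R n

variable {R : ℕ → E →L[ℝ] E}

lemma norm_dyadicAverage_term_le (hR : ∀ n, ‖R n‖ ≤ 1) (n : ℕ) :
    ‖(1 / 2 : ℝ) ^ (n + 1) • R n‖ ≤ (1 / 2 : ℝ) ^ (n + 1) := by
  rw [norm_smul, Real.norm_of_nonneg (by positivity)]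
  exact mul_le_of_le_one_right (by positivity) (hR n)

lemma norm_dyadicAverage_le (hR : ∀ n, ‖R n‖ ≤ 1) : ‖dyadicAverage R‖ ≤ 1 := by
  calc ‖dyadicAverage R‖ ≤ ∑' n : ℕ, (1 / 2 : ℝ) ^ (n + 1) :=
        tsum_of_norm_bounded ((summable_nat_add_iff 1).2 summable_geometric_two).hasSum
          (norm_dyadicAverage_term_le hR)
    _ = 1 := by simp_rw [pow_succ]; rw [tsum_mul_right, tsum_geometric_two]; norm_num

variable [CompleteSpace E]

lemma summable_dyadicAverage (hR : ∀ n, ‖R n‖ ≤ 1) :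
    Summable fun n : ℕ => (1 / 2 : ℝ) ^ (n + 1) • R n :=
  .of_norm_bounded ((summable_nat_add_iff 1).2 summable_geometric_two)
    (norm_dyadicAverage_term_le hR)

lemma dyadicAverage_apply (hR : ∀ n, ‖R n‖ ≤ 1) (x : E) :
    dyadicAverage R x = ∑' n : ℕ, (1 / 2 : ℝ) ^ (n + 1) • R n x :=
  (ContinuousLinearMap.apply ℝ E x).map_tsum (summable_dyadicAverage hR)

lemma summable_dyadicAverage_apply (hR : ∀ n, ‖R n‖ ≤ 1) (x : E) :
    Summable fun n : ℕ => (1 / 2 : ℝ) ^ (n + 1) • R n x :=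
  (summable_dyadicAverage hR).map (ContinuousLinearMap.apply ℝ E x)
    (ContinuousLinearMap.apply ℝ E x).continuous

end Averaging

section StarAlgEquiv

variable {A : Type*} [CStarAlgebra A]

noncomputable def StarAlgEquiv.toRealCLM (ψ : A ≃⋆ₐ[ℂ] A) : A →L[ℝ] A :=
  (ψ.toAlgEquiv.toLinearMap.restrictScalars ℝ).mkContinuous 1 fun x => by
    simp [StarAlgEquiv.norm_map]

lemma StarAlgEquiv.norm_toRealCLM_le (ψ : A ≃⋆ₐ[ℂ] A) : ‖ψ.toRealCLM‖ ≤ 1 :=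
  LinearMap.mkContinuous_norm_le _ zero_le_one _

lemma StarAlgEquiv.map_real_smul (ψ : A ≃⋆ₐ[ℂ] A) (c : ℝ) (y : A) : ψ (c • y) = c • ψ y :=
  ψ.toRealCLM.map_smul c y

end StarAlgEquiv

namespace TwoSidedIdeal

section

variable {A : Type*} [CStarAlgebra A] (I : TwoSidedIdeal A)

lemma real_smul_mem (r : ℝ) {a : A} (ha : a ∈ I) : r • a ∈ I := by
  rw [Algebra.smul_def]
  exact I.mul_mem_left _ _ ha

/-- `I ∩ star I`. Closed ideals of a C⋆-algebra are self-adjoint, but this star subalgebra is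
all that is needed to apply `cfcₙ_mem`. -/
def starCore : NonUnitalStarSubalgebra ℝ A where
  carrier := {a | a ∈ I ∧ star a ∈ I}
  add_mem' ha hb := ⟨I.add_mem ha.1 hb.1, by rw [star_add]; exact I.add_mem ha.2 hb.2⟩
  zero_mem' := ⟨I.zero_mem, by rw [star_zero]; exact I.zero_mem⟩
  mul_mem' ha hb := ⟨I.mul_mem_left _ _ hb.1, by rw [star_mul]; exact I.mul_mem_left _ _ ha.2⟩
  smul_mem' r _ ha :=
    ⟨I.real_smul_mem r ha.1, by rw [star_smul, star_trivial]; exact I.real_smul_mem r ha.2⟩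
  star_mem' ha := ⟨ha.2, by rw [star_star]; exact ha.1⟩

lemma isClosed_starCore (hI : IsClosed (I : Set A)) : IsClosed (I.starCore : Set A) :=
  hI.inter (hI.preimage continuous_star)

lemma cfcₙ_mem (hI : IsClosed (I : Set A)) (f : ℝ → ℝ) {a : A} (haI : a ∈ I)
    (ha : IsSelfAdjoint a) : cfcₙ f a ∈ I :=
  (_root_.cfcₙ_mem (s := I.starCore) (hs := I.isClosed_starCore hI) f
    ⟨haI, ha.star_eq.symm ▸ haI⟩).1

lemma neumannHalf_mem {T : A →L[ℝ] A} (hI : IsClosed (I : Set A)) (hTI : ∀ y ∈ I, T y ∈ I)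
    {x : A} (hx : x ∈ I) : neumannHalf T x ∈ I := by
  refine tsum_mem hI fun j => I.real_smul_mem _ ?_
  induction j with
  | zero => exact hx
  | succ j ih => rw [pow_succ']; exact hTI _ ih

lemma dyadicAverage_apply_mem {R : ℕ → A →L[ℝ] A} (hI : IsClosed (I : Set A))
    (hR : ∀ n, ‖R n‖ ≤ 1) (hRI : ∀ n, ∀ y ∈ I, R n y ∈ I) {y : A} (hy : y ∈ I) :
    dyadicAverage R y ∈ I := by
  rw [dyadicAverage_apply hR]
  exact tsum_mem hI fun n => I.real_smul_mem _ (hRI n y hy)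

end

variable {A : Type*} [CStarAlgebra A] [PartialOrder A] [StarOrderedRing A] (I : TwoSidedIdeal A)

lemma rpow_mem (hI : IsClosed (I : Set A)) {a : A} (haI : a ∈ I) (ha : 0 ≤ a) {p : ℝ}
    (hp : 0 < p) : a ^ p ∈ I := by
  rw [CFC.rpow_eq_cfc_real, ← cfcₙ_eq_cfc (hf := (Real.continuous_rpow_const hp.le).continuousOn)
    (hf0 := Real.zero_rpow hp.ne')]
  exact I.cfcₙ_mem hI _ haI ha.isSelfAdjoint

lemma exists_nonneg_forall_le_smul (hI : IsClosed (I : Set A)) {S : Set A} (hS : S.Countable)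
    (hSI : ∀ b ∈ S, 0 ≤ b ∧ b ∈ I) : ∃ x ∈ I, 0 ≤ x ∧ ∀ b ∈ S, ∃ M : ℝ, 0 < M ∧ b ≤ M • x := by
  obtain ⟨b, hb⟩ := (hS.insert 0).exists_eq_range (Set.insert_nonempty 0 S)
  have hbI : ∀ m, 0 ≤ b m ∧ b m ∈ I := fun m => by
    rcases (hb ▸ Set.mem_range_self m : b m ∈ insert 0 S) with h | h
    · rw [h]; exact ⟨le_rfl, I.zero_mem⟩
    · exact hSI _ h
  set w : ℕ → ℝ := fun m => (1 / 2 : ℝ) ^ m * (‖b m‖ + 1)⁻¹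
  have hw : ∀ m, 0 < w m := fun m => by positivity
  have hsum : Summable fun m => w m • b m := by
    refine .of_norm_bounded summable_geometric_two fun m => ?_
    rw [norm_smul, Real.norm_of_nonneg (hw m).le, mul_assoc]
    refine mul_le_of_le_one_right (by positivity) ?_
    rw [inv_mul_le_iff₀ (by positivity)]
    linarith
  have hterm : ∀ m, 0 ≤ w m • b m := fun m => smul_nonneg (hw m).le (hbI m).1
  refine ⟨∑' m, w m • b m, tsum_mem hI fun m => I.real_smul_mem _ (hbI m).2, tsum_nonneg hterm,
    fun a ha => ?_⟩
  obtain ⟨m, rfl⟩ : a ∈ Set.range b := hb ▸ Set.mem_insert_of_mem 0 ha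
  refine ⟨(w m)⁻¹, inv_pos.2 (hw m), ?_⟩
  calc b m = (w m)⁻¹ • w m • b m := by rw [smul_smul, inv_mul_cancel₀ (hw m).ne', one_smul]
    _ ≤ (w m)⁻¹ • ∑' m, w m • b m :=
        smul_le_smul_of_nonneg_left (hsum.le_tsum m fun j _ => hterm j) (inv_nonneg.2 (hw m).le)

end TwoSidedIdeal

section CStarAlgebra

variable {A : Type*} [CStarAlgebra A] [PartialOrder A] [StarOrderedRing A]

lemma IsSelfAdjoint.norm_le_of_mem_Icc {d : A} (hd : IsSelfAdjoint d) {r : ℝ} (hr : 0 ≤ r)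
    (h : d ∈ Set.Icc (-algebraMap ℝ A r) (algebraMap ℝ A r)) : ‖d‖ ≤ r := by
  obtain ⟨h₁, h₂⟩ := h
  rw [← map_neg, algebraMap_le_iff_le_spectrum] at h₁
  rw [le_algebraMap_iff_spectrum_le] at h₂
  rw [← cfc_id' ℝ d]
  exact norm_cfc_le hr fun t ht => abs_le.2 ⟨h₁ t ht, h₂ t ht⟩

lemma norm_sub_le_of_le_smul {x y : A} (hx₀ : 0 ≤ x) (hy₀ : 0 ≤ y) (hx₁ : x ≤ 1) (hy₁ : y ≤ 1)
    {K : ℝ} (hK : 1 ≤ K) (hxy : x ≤ K • y) (hyx : y ≤ K • x) : ‖x - y‖ ≤ K - 1 := by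
  have key : ∀ {a b : A}, b ≤ 1 → a ≤ K • b → a - b ≤ algebraMap ℝ A (K - 1) := fun hb hab => by
    calc _ ≤ K • _ - _ := sub_le_sub_right hab _
      _ = (K - 1) • _ := by rw [sub_smul, one_smul]
      _ ≤ (K - 1) • (1 : A) := smul_le_smul_of_nonneg_left hb (by linarith)
      _ = _ := (Algebra.algebraMap_eq_smul_one _).symm
  refine (hx₀.isSelfAdjoint.sub hy₀.isSelfAdjoint).norm_le_of_mem_Icc (by linarith)
    ⟨?_, key hy₁ hxy⟩
  rw [neg_le, neg_sub]
  exact key hx₁ hyx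

namespace CFC

lemma smul_rpow {x : A} (hx : 0 ≤ x) {c : ℝ} (hc : 0 ≤ c) {p : ℝ} (hp : 0 ≤ p) :
    (c • x) ^ p = c ^ p • x ^ p := by
  rw [rpow_eq_cfc_real (smul_nonneg hc hx), rpow_eq_cfc_real, ← cfc_smul ..,
    ← cfc_comp_smul c (fun t : ℝ => t ^ p) x ((Real.continuous_rpow_const hp).continuousOn)]
  exact cfc_congr fun t ht => Real.mul_rpow hc (spectrum_nonneg_of_nonneg hx ht)

lemma rpow_le_rpow_of_exponent_ge {x : A} (hx₀ : 0 ≤ x) (hx₁ : x ≤ 1) {p q : ℝ} (hq : 0 ≤ q)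
    (hqp : q ≤ p) : x ^ p ≤ x ^ q := by
  have hcont (r : ℝ) (hr : 0 ≤ r) : ContinuousOn (fun t : ℝ => t ^ r) (spectrum ℝ x) :=
    (Real.continuous_rpow_const hr).continuousOn
  rw [rpow_eq_cfc_real, rpow_eq_cfc_real]
  refine cfc_mono (hf := hcont p (hq.trans hqp)) (hg := hcont q hq) fun t ht => ?_
  refine Real.rpow_le_rpow_of_exponent_ge' (spectrum_nonneg_of_nonneg hx₀ ht) ?_ hq hqp
  exact (le_algebraMap_iff_spectrum_le (r := (1 : ℝ))).1 (by rwa [map_one]) t ht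

lemma rpow_le_one {x : A} (hx : x ≤ 1) {p : ℝ} (hp : p ∈ Set.Icc 0 1) : x ^ p ≤ 1 :=
  (rpow_le_rpow hp hx).trans_eq one_rpow

lemma rpow_le_smul_rpow {x y : A} (hy : 0 ≤ y) {c : ℝ} (hc : 0 ≤ c) (hxy : x ≤ c • y) {p : ℝ}
    (hp : p ∈ Set.Icc 0 1) : x ^ p ≤ c ^ p • y ^ p :=
  (rpow_le_rpow hp hxy).trans_eq (smul_rpow hy hc hp.1)

end CFC

lemma StarAlgEquiv.map_rpow (ψ : A ≃⋆ₐ[ℂ] A) {x : A} (hx : 0 ≤ x) {p : ℝ} (hp : 0 ≤ p) :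
    ψ (x ^ p) = ψ x ^ p := by
  rw [CFC.rpow_def, CFC.rpow_def]
  exact StarAlgHomClass.map_cfc (S := ℂ) ψ _ x ((NNReal.continuous_rpow_const hp).continuousOn)
    (hφa := map_nonneg ψ hx)

lemma norm_one_sub_rpow_mul_sq_le {s a : A} (hs₀ : 0 ≤ s) (hs₁ : s ≤ 1) {M : ℝ} (hM : 0 ≤ M)
    (ha : a * star a ≤ M • s) {p : ℝ} (hp : 0 ≤ p) : ‖(1 - s ^ p) * a‖ ^ 2 ≤ M * p := by
  set e := 1 - s ^ p
  have he : IsSelfAdjoint e := (IsSelfAdjoint.one A).sub CFC.rpow_nonneg.isSelfAdjoint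
  have hcont : ContinuousOn (fun t : ℝ => t ^ p) (spectrum ℝ s) :=
    (Real.continuous_rpow_const hp).continuousOn
  have hese : e * s * e = cfc (fun t : ℝ => (1 - t ^ p) * t * (1 - t ^ p)) s := by
    have he_cfc : e = cfc (fun t : ℝ => 1 - t ^ p) s := by
      rw [cfc_sub .., cfc_const_one ℝ s, ← CFC.rpow_eq_cfc_real]
    rw [he_cfc]
    nth_rw 2 [← cfc_id' ℝ s]
    rw [← cfc_mul .., ← cfc_mul ..]
  have hese_le : ‖e * s * e‖ ≤ p := by
    rw [hese]
    refine norm_cfc_le hp fun t ht => ?_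
    have ht₀ : 0 ≤ t := spectrum_nonneg_of_nonneg hs₀ ht
    have ht₁ : t ≤ 1 := (le_algebraMap_iff_spectrum_le (r := (1 : ℝ))).1 (by rwa [map_one]) t ht
    have hq₀ : 0 ≤ 1 - t ^ p := sub_nonneg.2 (Real.rpow_le_one ht₀ ht₁ hp)
    have hq₁ : 1 - t ^ p ≤ 1 := sub_le_self _ (Real.rpow_nonneg ht₀ p)
    rw [Real.norm_of_nonneg (by positivity)]
    calc (1 - t ^ p) * t * (1 - t ^ p) ≤ t * (1 - t ^ p) := by
          nlinarith [mul_nonneg (mul_nonneg ht₀ hq₀) (sub_nonneg.2 hq₁)]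
      _ ≤ p := Real.mul_one_sub_rpow_le ht₀ hp
  calc ‖e * a‖ ^ 2 = ‖e * (a * star a) * e‖ := by
        rw [sq, ← CStarRing.norm_self_mul_star, star_mul, he.star_eq, mul_assoc, mul_assoc,
          ← mul_assoc a]
    _ ≤ ‖e * (M • s) * e‖ := by
        refine CStarAlgebra.norm_le_norm_of_nonneg_of_le ?_ (he.conjugate_le_conjugate ha)
        simpa only [he.star_eq] using star_left_conjugate_nonneg (mul_star_self_nonneg a) e
    _ = M * ‖e * s * e‖ := by
        rw [mul_smul_comm, smul_mul_assoc, norm_smul, Real.norm_of_nonneg hM]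
    _ ≤ M * p := mul_le_mul_of_nonneg_left hese_le hM

lemma tendsto_norm_one_sub_rpow_mul {s a : A} (hs₀ : 0 ≤ s) (hs₁ : s ≤ 1) {M : ℝ} (hM : 0 ≤ M)
    (ha : a * star a ≤ M • s) {p : ℕ → ℝ} (hp₀ : ∀ n, 0 ≤ p n) (hp : Tendsto p atTop (𝓝 0)) :
    Tendsto (fun n => ‖(1 - s ^ p n) * a‖) atTop (𝓝 0) := by
  have hlim : Tendsto (fun n => √(M * p n)) atTop (𝓝 0) := by
    simpa using (hp.const_mul M).sqrt
  exact squeeze_zero (fun _ => norm_nonneg _)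
    (fun n => Real.le_sqrt_of_sq_le (norm_one_sub_rpow_mul_sq_le hs₀ hs₁ hM ha (hp₀ n))) hlim

lemma norm_rpow_sub_map_rpow_le (ψ : A ≃⋆ₐ[ℂ] A) {s : A} (hs₀ : 0 ≤ s) (hs₁ : s ≤ 1) {C : ℝ}
    (hC : 1 ≤ C) (h₁ : ψ s ≤ C • s) (h₂ : s ≤ C • ψ s) {p : ℝ} (hp : p ∈ Set.Icc 0 1) :
    ‖s ^ p - ψ (s ^ p)‖ ≤ C ^ p - 1 := by
  have hψs₀ : 0 ≤ ψ s := map_nonneg ψ hs₀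
  have hψs₁ : ψ s ≤ 1 := by simpa using OrderHomClass.mono ψ hs₁
  rw [ψ.map_rpow hs₀ hp.1]
  exact norm_sub_le_of_le_smul CFC.rpow_nonneg CFC.rpow_nonneg (CFC.rpow_le_one hs₁ hp)
    (CFC.rpow_le_one hψs₁ hp) (Real.one_le_rpow hC hp.1)
    (CFC.rpow_le_smul_rpow hψs₀ (by linarith) h₂ hp)
    (CFC.rpow_le_smul_rpow hs₀ (by linarith) h₁ hp)

lemma tendsto_norm_rpow_sub_map_rpow (ψ : A ≃⋆ₐ[ℂ] A) {s : A} (hs₀ : 0 ≤ s) (hs₁ : s ≤ 1)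
    {C : ℝ} (hC : 1 ≤ C) (h₁ : ψ s ≤ C • s) (h₂ : s ≤ C • ψ s) {p : ℕ → ℝ}
    (hp₀₁ : ∀ n, p n ∈ Set.Icc 0 1) (hp : Tendsto p atTop (𝓝 0)) :
    Tendsto (fun n => ‖s ^ p n - ψ (s ^ p n)‖) atTop (𝓝 0) := by
  have hlim : Tendsto (fun n => C ^ p n - 1) atTop (𝓝 0) := by
    simpa using ((Real.continuousAt_const_rpow (by linarith : C ≠ 0)).tendsto.comp hp).sub_const 1
  exact squeeze_zero (fun _ => norm_nonneg _)
    (fun n => norm_rpow_sub_map_rpow_le ψ hs₀ hs₁ hC h₁ h₂ (hp₀₁ n)) hlim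

variable {T : A →L[ℝ] A}

lemma neumannHalf_nonneg (hT : ∀ y, 0 ≤ y → 0 ≤ T y) {x : A} (hx : 0 ≤ x) :
    0 ≤ neumannHalf T x :=
  tsum_nonneg fun j => smul_nonneg (by positivity) (T.pow_apply_nonneg hT j hx)

lemma le_neumannHalf (hTn : ‖T‖ ≤ 1) (hT : ∀ y, 0 ≤ y → 0 ≤ T y) {x : A} (hx : 0 ≤ x) :
    x ≤ neumannHalf T x := by
  rw [neumannHalf_eq hTn x]
  exact le_add_of_nonneg_right (smul_nonneg (by norm_num) (hT _ (neumannHalf_nonneg hT hx)))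

lemma apply_neumannHalf_le (hTn : ‖T‖ ≤ 1) {x : A} (hx : 0 ≤ x) :
    T (neumannHalf T x) ≤ (2 : ℝ) • neumannHalf T x := by
  calc T (neumannHalf T x) ≤ (2 : ℝ) • x + T (neumannHalf T x) :=
        le_add_of_nonneg_left (smul_nonneg (by norm_num) hx)
    _ = (2 : ℝ) • neumannHalf T x := by
        nth_rw 2 [neumannHalf_eq hTn x]
        rw [smul_add, smul_smul]
        norm_num

variable {R : ℕ → A →L[ℝ] A}

lemma dyadicAverage_apply_nonneg (hR : ∀ n, ‖R n‖ ≤ 1) (hRpos : ∀ n y, 0 ≤ y → 0 ≤ R n y) {y : A}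
    (hy : 0 ≤ y) : 0 ≤ dyadicAverage R y := by
  rw [dyadicAverage_apply hR]
  exact tsum_nonneg fun n => smul_nonneg (by positivity) (hRpos n y hy)

lemma apply_le_dyadicAverage_apply (hR : ∀ n, ‖R n‖ ≤ 1) (hRpos : ∀ n y, 0 ≤ y → 0 ≤ R n y)
    (n : ℕ) {y : A} (hy : 0 ≤ y) : R n y ≤ (2 : ℝ) ^ (n + 1) • dyadicAverage R y := by
  have hterm : (1 / 2 : ℝ) ^ (n + 1) • R n y ≤ dyadicAverage R y := by
    rw [dyadicAverage_apply hR]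
    exact (summable_dyadicAverage_apply hR y).le_tsum n fun m _ =>
      smul_nonneg (by positivity) (hRpos m y hy)
  calc R n y = (2 : ℝ) ^ (n + 1) • (1 / 2 : ℝ) ^ (n + 1) • R n y := by
        rw [smul_smul, ← mul_pow]; norm_num
    _ ≤ (2 : ℝ) ^ (n + 1) • dyadicAverage R y := smul_le_smul_of_nonneg_left hterm (by positivity)

end CStarAlgebra

section QuasiInvariant

variable {A : Type*} [CStarAlgebra A] [PartialOrder A] [StarOrderedRing A] {Γ : Type*}
  (ρ : Γ → (A ≃⋆ₐ[ℂ] A)) (I : TwoSidedIdeal A)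

def IsQuasiInvariant (s : A) : Prop :=
  ∀ g, ∃ C : ℝ, 1 ≤ C ∧ ρ g s ≤ C • s ∧ s ≤ C • ρ g s

lemma exists_ge_forall_map_le_smul [Nonempty Γ] [Countable Γ] (hI : IsClosed (I : Set A))
    (hIinv : ∀ g, ∀ a ∈ I, ρ g a ∈ I) {x : A} (hxI : x ∈ I) (hx : 0 ≤ x) :
    ∃ h ∈ I, 0 ≤ h ∧ x ≤ h ∧ ∀ g, ∃ C : ℝ, ρ g h ≤ C • h := by
  obtain ⟨v, hv⟩ := exists_surjective_nat Γ
  set R : ℕ → A →L[ℝ] A := fun n => (ρ (v n)).toRealCLM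
  have hR : ∀ n, ‖R n‖ ≤ 1 := fun n => (ρ (v n)).norm_toRealCLM_le
  have hRpos : ∀ n y, 0 ≤ y → 0 ≤ R n y := fun n _ hy => map_nonneg (ρ (v n)) hy
  set T := dyadicAverage R
  have hTn : ‖T‖ ≤ 1 := norm_dyadicAverage_le hR
  have hT : ∀ y, 0 ≤ y → 0 ≤ T y := fun _ => dyadicAverage_apply_nonneg hR hRpos
  have hTI : ∀ y ∈ I, T y ∈ I := fun _ => I.dyadicAverage_apply_mem hI hR fun n => hIinv (v n)
  have hh₀ := neumannHalf_nonneg hT hx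
  refine ⟨neumannHalf T x, I.neumannHalf_mem hI hTI hxI, hh₀, le_neumannHalf hTn hT hx,
    fun g => ?_⟩
  obtain ⟨n, rfl⟩ := hv g
  refine ⟨2 ^ (n + 2), ?_⟩
  calc ρ (v n) (neumannHalf T x) = R n (neumannHalf T x) := rfl
    _ ≤ (2 : ℝ) ^ (n + 1) • T (neumannHalf T x) := apply_le_dyadicAverage_apply hR hRpos n hh₀
    _ ≤ (2 : ℝ) ^ (n + 1) • (2 : ℝ) • neumannHalf T x :=
        smul_le_smul_of_nonneg_left (apply_neumannHalf_le hTn hx) (by positivity)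
    _ = (2 : ℝ) ^ (n + 2) • neumannHalf T x := by rw [smul_smul, ← pow_succ]

lemma isQuasiInvariant_of_forall_map_le_smul [Group Γ] (hρ : ∀ g h a, ρ (g * h) a = ρ g (ρ h a))
    {s : A} (hs : 0 ≤ s) (h : ∀ g, ∃ C : ℝ, ρ g s ≤ C • s) : IsQuasiInvariant ρ s := by
  intro g
  have hρinv : ∀ y, ρ g (ρ g⁻¹ y) = y := fun y => by
    rw [← hρ, mul_inv_cancel]
    exact EquivLike.injective (ρ 1) (by rw [← hρ, one_mul])
  obtain ⟨C₁, h₁⟩ := h g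
  obtain ⟨C₂, h₂⟩ := h g⁻¹
  have h₂' : s ≤ C₂ • ρ g s := by
    simpa only [hρinv, (ρ g).map_real_smul] using OrderHomClass.mono (ρ g) h₂
  refine ⟨max 1 (max C₁ C₂), le_max_left _ _, h₁.trans ?_, h₂'.trans ?_⟩
  · exact smul_le_smul_of_nonneg_right (le_max_of_le_right (le_max_left _ _)) hs
  · exact smul_le_smul_of_nonneg_right (le_max_of_le_right (le_max_right _ _)) (map_nonneg _ hs)

lemma exists_isQuasiInvariant [Group Γ] [Countable Γ] (hρ : ∀ g h a, ρ (g * h) a = ρ g (ρ h a))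
    (hI : IsClosed (I : Set A)) (hIinv : ∀ g, ∀ a ∈ I, ρ g a ∈ I) {x : A} (hxI : x ∈ I)
    (hx : 0 ≤ x) :
    ∃ s ∈ I, 0 ≤ s ∧ s ≤ 1 ∧ (∃ M : ℝ, 0 < M ∧ x ≤ M • s) ∧ IsQuasiInvariant ρ s := by
  obtain ⟨h, hhI, hh₀, hxh, hC⟩ := exists_ge_forall_map_le_smul ρ I hI hIinv hxI hx
  have hc : 0 < ‖h‖ + 1 := by positivity
  have hs₀ : 0 ≤ (‖h‖ + 1)⁻¹ • h := smul_nonneg (inv_nonneg.2 hc.le) hh₀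
  refine ⟨(‖h‖ + 1)⁻¹ • h, I.real_smul_mem _ hhI, hs₀, ?_, ⟨‖h‖ + 1, hc, ?_⟩,
    isQuasiInvariant_of_forall_map_le_smul ρ hρ hs₀ fun g => ?_⟩
  · refine (CStarAlgebra.norm_le_one_iff_of_nonneg _ hs₀).1 ?_
    rw [norm_smul, Real.norm_of_nonneg (inv_nonneg.2 hc.le), inv_mul_le_one₀ hc]
    linarith
  · rwa [smul_smul, mul_inv_cancel₀ hc.ne', one_smul]
  · obtain ⟨C, hC⟩ := hC g
    refine ⟨C, ?_⟩
    rw [(ρ g).map_real_smul, smul_comm]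
    exact smul_le_smul_of_nonneg_left hC (inv_nonneg.2 hc.le)

end QuasiInvariant

/-- Let `A` be a unital C*-algebra with a closed two-sided ideal `I`, and let a countable
group `Γ` act on `A` by *-automorphisms preserving `I`.  For any countable subset
`I₀ ⊆ I` there is an increasing sequence `(α n)` in `I` with `0 ≤ α n ≤ 1` such that
`‖(1 − α n) a‖ → 0` for all `a ∈ I₀` and `‖α n − g·(α n)‖ → 0` for all `g ∈ Γ`. -/
theorem exists_quasicentral_approximate_unit
    (A : Type*) [CStarAlgebra A] [PartialOrder A] [StarOrderedRing A]
    (Γ : Type*) [Group Γ] [Countable Γ]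
    (ρ : Γ → (A ≃⋆ₐ[ℂ] A)) (hρ : ∀ g h a, ρ (g * h) a = ρ g (ρ h a))
    (I : TwoSidedIdeal A) (hIclosed : IsClosed (I : Set A))
    (hIinv : ∀ (g : Γ), ∀ a ∈ I, ρ g a ∈ I)
    (I₀ : Set A) (hI₀ : I₀.Countable) (hI₀I : I₀ ⊆ (I : Set A)) :
    ∃ α : ℕ → A,
      Monotone α ∧
      (∀ n, α n ∈ I) ∧
      (∀ n, 0 ≤ α n) ∧
      (∀ n, α n ≤ 1) ∧
      (∀ a ∈ I₀, Tendsto (fun n => ‖(1 - α n) * a‖) atTop (nhds 0)) ∧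
      (∀ g : Γ, Tendsto (fun n => ‖α n - ρ g (α n)‖) atTop (nhds 0)) := by
  obtain ⟨x, hxI, hx₀, hx⟩ := I.exists_nonneg_forall_le_smul hIclosed
    (hI₀.image fun a => a * star a) <| by
      rintro _ ⟨a, ha, rfl⟩
      exact ⟨mul_star_self_nonneg a, I.mul_mem_right _ _ (hI₀I ha)⟩
  obtain ⟨s, hsI, hs₀, hs₁, ⟨M, hM, hxs⟩, hsρ⟩ :=
    exists_isQuasiInvariant ρ I hρ hIclosed hIinv hxI hx₀
  set p : ℕ → ℝ := fun n => 1 / ((n : ℝ) + 1)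
  have hp : ∀ n, p n ∈ Set.Icc 0 1 := fun n =>
    ⟨by positivity, div_le_one_of_le₀ (by linarith [n.cast_nonneg (α := ℝ)]) (by positivity)⟩
  have hp_anti : Antitone p := fun m n hmn => one_div_le_one_div_of_le (by positivity) (by gcongr)
  refine ⟨fun n => s ^ p n, fun m n hmn => CFC.rpow_le_rpow_of_exponent_ge hs₀ hs₁ (hp n).1
    (hp_anti hmn), fun n => I.rpow_mem hIclosed hsI hs₀ (by positivity), fun n => CFC.rpow_nonneg,
    fun n => CFC.rpow_le_one hs₁ (hp n), fun a ha => ?_, fun g => ?_⟩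
  · obtain ⟨M', hM', hax⟩ := hx _ ⟨a, ha, rfl⟩
    have has : a * star a ≤ (M' * M) • s := hax.trans <| by
      rw [mul_smul]; exact smul_le_smul_of_nonneg_left hxs hM'.le
    exact tendsto_norm_one_sub_rpow_mul hs₀ hs₁ (by positivity) has (fun n => (hp n).1)
      tendsto_one_div_add_atTop_nhds_zero_nat
  · obtain ⟨C, hC, h₁, h₂⟩ := hsρ g
    exact tendsto_norm_rpow_sub_map_rpow (ρ g) hs₀ hs₁ hC h₁ h₂ hp
      tendsto_one_div_add_atTop_nhds_zero_nat
end

section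
/- Let Γ be a discrete subgroup of a locally compact group G. Then the canonical continuous map π: ΔΓ → ΔG extending the inclusion Γ ↪ G is a topological embedding; equivalently, the restriction map π_*: C_b(G) → ℓ^∞(Γ) is surjective. -/
/-!
Pick an open neighbourhood `U` of `1` so small that each translate `gU` meets at most one of
the translates `γU`, `γ ∈ Γ`; this is possible because `Γ` is discrete. The sets `γU` are then
pairwise disjoint and locally finite, so for `f ∈ ℓ^∞(Γ)` the locally finite sum `∑_γ f(γ) φ_γ`,
with `φ_γ : G → [0, 1]` continuous, `φ_γ(γ) = 1` and `φ_γ = 0` off `γU` (topological groups are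
completely regular), is a bounded continuous extension of `f`.
-/

open BoundedContinuousFunction Set unitInterval Function
open scoped Pointwise

instance IsTopologicalGroup.completelyRegularSpace (G : Type*) [Group G] [TopologicalSpace G]
    [IsTopologicalGroup G] : CompletelyRegularSpace G :=
  .of_exists_uniformSpace ⟨IsTopologicalGroup.rightUniformSpace G, rfl⟩

section CompletelyRegular

variable {X : Type*} [TopologicalSpace X] [CompletelyRegularSpace X]

theorem CompletelyRegularSpace.exists_continuous_unitInterval_one_zero {x : X} {U : Set X}
    (hU : IsOpen U) (hx : x ∈ U) : ∃ φ : X → I, Continuous φ ∧ φ x = 1 ∧ EqOn φ 0 Uᶜ := by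
  obtain ⟨f, hf, hfx, hfU⟩ := CompletelyRegularSpace.completely_regular_isOpen x U hU hx
  exact ⟨σ ∘ f, continuous_symm.comp hf, by simp [hfx], fun y hy => by simp [hfU hy]⟩

theorem BoundedContinuousFunction.exists_apply_eq_of_pairwise_disjoint_of_locallyFinite
    {ι : Type*} {U : ι → Set X} {x : ι → X} (hUo : ∀ i, IsOpen (U i)) (hx : ∀ i, x i ∈ U i)
    (hdisj : Pairwise (Disjoint on U)) (hfin : LocallyFinite U) (f : ι → ℝ) (C : ℝ)
    (hf : ∀ i, ‖f i‖ ≤ C) : ∃ F : X →ᵇ ℝ, ∀ i, F (x i) = f i := by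
  choose φ hφc hφx hφU using fun i =>
    CompletelyRegularSpace.exists_continuous_unitInterval_one_zero (hUo i) (hx i)
  set term : ι → X → ℝ := fun i y => f i * φ i y
  have hterm_zero : ∀ i y, y ∉ U i → term i y = 0 := fun i y hy => by simp [term, hφU i hy]
  have hsingle : ∀ j y, y ∈ U j → ∑ᶠ i, term i y = term j y := fun j y hy =>
    finsum_eq_single _ j fun i hij => hterm_zero i y fun hyi => (hdisj hij).ne_of_mem hyi hy rfl
  have hcont : Continuous fun y => ∑ᶠ i, term i y :=
    continuous_finsum (fun i => continuous_const.mul (continuous_subtype_val.comp (hφc i)))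
      (hfin.subset fun i y hy => by_contra fun hyi => hy (hterm_zero i y hyi))
  -- `max C 0` rather than `C`: when `ι` is empty, `C` may be negative
  have hbound : ∀ y, ‖∑ᶠ i, term i y‖ ≤ max C 0 := by
    intro y
    by_cases hy : ∃ j, y ∈ U j
    · obtain ⟨j, hj⟩ := hy
      rw [hsingle j y hj, norm_mul, Real.norm_of_nonneg (φ j y).2.1]
      calc ‖f j‖ * φ j y ≤ ‖f j‖ * 1 := by gcongr; exact (φ j y).2.2
        _ ≤ max C 0 := by rw [mul_one]; exact (hf j).trans (le_max_left _ _)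
    · push Not at hy
      rw [finsum_eq_zero_of_forall_eq_zero fun i => hterm_zero i y (hy i), norm_zero]
      exact le_max_right _ _
  refine ⟨.ofNormedAddCommGroup _ hcont _ hbound, fun j => ?_⟩
  simp [hsingle j (x j) (hx j), term, hφx j]

end CompletelyRegular

namespace Subgroup

variable {G : Type*} [Group G] [TopologicalSpace G] [IsTopologicalGroup G]
  (Γ : Subgroup G) [DiscreteTopology Γ]

theorem exists_isOpen_one_mem_subsingleton_smul_inter_nonempty :
    ∃ U : Set G, IsOpen U ∧ (1 : G) ∈ U ∧
      ∀ g : G, {γ : Γ | ((γ : G) • U ∩ g • U).Nonempty}.Subsingleton := by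
  obtain ⟨V, hV, -, hVΓ⟩ := IsDiscrete.exists_nhds_eq_one_of_image_mulLeft_inter_nonempty Γ
    (isDiscrete_iff_discreteTopology.mpr ‹_›)
  obtain ⟨W, hW, -, hWinv, hWV⟩ := exists_closed_nhds_one_inv_eq_mul_subset hV
  refine ⟨interior W, isOpen_interior, mem_interior_iff_mem_nhds.mpr hW, fun g γ hγ γ' hγ' => ?_⟩
  obtain ⟨_, ⟨u₂, hu₂, hx⟩, u₁, hu₁, rfl⟩ := hγ
  obtain ⟨_, ⟨u₄, hu₄, hy⟩, u₃, hu₃, rfl⟩ := hγ'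
  simp only [smul_eq_mul] at hx hy
  have hdiv : ∀ {a b}, a ∈ interior W → b ∈ interior W → a * b⁻¹ ∈ V := fun ha hb =>
    hWV (mul_mem_mul (interior_subset ha) (hWinv ▸ inv_mem_inv.mpr (interior_subset hb)))
  have hmove : (γ' : G)⁻¹ * γ * (u₂ * u₁⁻¹) = u₄ * u₃⁻¹ := by
    rw [eq_mul_inv_of_mul_eq hx, eq_mul_inv_of_mul_eq hy]; group
  have hone := hVΓ _ (Γ.mul_mem (Γ.inv_mem γ'.2) γ.2)
    ⟨_, ⟨_, hdiv hu₂ hu₁, rfl⟩, by simpa only [hmove] using hdiv hu₄ hu₃⟩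
  exact (Subtype.ext (inv_mul_eq_one.mp hone)).symm

theorem exists_isOpen_one_mem_pairwise_disjoint_locallyFinite_smul :
    ∃ U : Set G, IsOpen U ∧ (1 : G) ∈ U ∧ Pairwise (Disjoint on fun γ : Γ => (γ : G) • U) ∧
      LocallyFinite fun γ : Γ => (γ : G) • U := by
  obtain ⟨U, hUo, hU1, hsub⟩ := Γ.exists_isOpen_one_mem_subsingleton_smul_inter_nonempty
  have hself : ∀ g : G, g ∈ g • U := fun g => by simpa using smul_mem_smul_set (a := g) hU1
  refine ⟨U, hUo, hU1, fun γ γ' hne => ?_, fun g => ⟨g • U, (hUo.smul g).mem_nhds (hself g),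
    (hsub g).finite⟩⟩
  refine Set.disjoint_left.mpr fun y hyγ hyγ' => hne (hsub y ?_ ?_)
  exacts [⟨y, hyγ, hself y⟩, ⟨y, hyγ', hself y⟩]

end Subgroup

theorem restriction_Cb_to_linfty_surjective_of_discrete_subgroup_general
    (G : Type*) [Group G] [TopologicalSpace G] [IsTopologicalGroup G]
    (Γ : Subgroup G) [DiscreteTopology ↥Γ] :
    Function.Surjective
      (fun F : G →ᵇ ℝ =>
        F.compContinuous ⟨(Subtype.val : ↥Γ → G), continuous_subtype_val⟩) := by
  intro f
  obtain ⟨U, hUo, hU1, hdisj, hfin⟩ := Γ.exists_isOpen_one_mem_pairwise_disjoint_locallyFinite_smul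
  obtain ⟨F, hF⟩ := exists_apply_eq_of_pairwise_disjoint_of_locallyFinite
    (fun γ : Γ => hUo.smul (γ : G)) (fun γ => by simpa using smul_mem_smul_set (a := (γ : G)) hU1)
    hdisj hfin f ‖f‖ f.norm_coe_le_norm
  exact ⟨F, ext hF⟩

/-- For a discrete subgroup `Γ` of a locally compact (Hausdorff) group `G`, the restriction
map `C_b(G) → ℓ^∞(Γ)` is surjective; equivalently, the canonical continuous map
`ΔΓ → ΔG` extending the inclusion is a topological embedding. -/
theorem restriction_Cb_to_linfty_surjective_of_discrete_subgroup
    (G : Type*) [Group G] [TopologicalSpace G] [IsTopologicalGroup G]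
    [LocallyCompactSpace G] [T2Space G]
    (Γ : Subgroup G) [DiscreteTopology ↥Γ] :
    Function.Surjective
      (fun F : G →ᵇ ℝ =>
        F.compContinuous ⟨(Subtype.val : ↥Γ → G), continuous_subtype_val⟩) :=
  restriction_Cb_to_linfty_surjective_of_discrete_subgroup_general G Γ
end

section
/- Fix d ≥ 3 and let Λ ≤ GL_d(ℤ) be the subgroup of matrices of the form [[I_{d-1}, u],[0, 1]] with u ∈ ℤ^{d-1}. If g ∈ GL_d(ℤ) is such that the set {s g s^{-1} : s ∈ Λ} of Λ-conjugates of g is finite, then g ∈ Λ or −g ∈ Λ. -/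
/-!
Conjugating `M = [[A, B], [C, D]]` by `[[1, U], [0, 1]]` gives
`[[A + UC, B + UD - (A + UC)U], [C, D - CU]]`. Along the line `k • U` (`k ∈ ℤ`) the lower-right
block moves affinely with slope `-CU`, so finitely many conjugates force `C = 0`; the upper-right
block then moves with slope `UD - AU`, which forces `AU = UD` for every column `U`, i.e. `A` and
`D` are the same scalar `δ`. Since `g` is invertible, `δ = ±1`.
-/

open Matrix

def jmat (d : ℕ) (u : Fin (d - 1) → ℤ) : Matrix (Fin (d - 1) ⊕ Unit) (Fin (d - 1) ⊕ Unit) ℤ :=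
  fromBlocks 1 (Matrix.of fun i (_ : Unit) => u i) 0 1

theorem jmat_mul (d : ℕ) (u v : Fin (d - 1) → ℤ) :
    jmat d u * jmat d v = jmat d (u + v) := by
  simp [jmat, fromBlocks_multiply]
  ext i j
  simp [Matrix.add_apply]
  ring

theorem jmat_zero (d : ℕ) : jmat d 0 = 1 := by
  have h : (Matrix.of fun i (_ : Unit) => ((0 : Fin (d-1) → ℤ) i)) =
      (0 : Matrix (Fin (d - 1)) Unit ℤ) := rfl
  simp only [jmat, h, fromBlocks_one]

def jU (d : ℕ) (u : Fin (d - 1) → ℤ) : (Matrix (Fin (d - 1) ⊕ Unit) (Fin (d - 1) ⊕ Unit) ℤ)ˣ :=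
  ⟨jmat d u, jmat d (-u),
    by rw [jmat_mul]; simpa using jmat_zero d,
    by rw [jmat_mul]; simpa using jmat_zero d⟩

theorem AddMonoidHom.eq_zero_of_finite_range_const_add {G V : Type*} [AddGroup G]
    [AddCommGroup V] [IsAddTorsionFree V] (a : V) (φ : G →+ V)
    (h : (Set.range fun x => a + φ x).Finite) : φ = 0 := by
  ext x
  by_contra hx
  have hinj : Function.Injective fun k : ℤ => a + φ (k • x) := fun k l hkl =>
    smul_left_injective ℤ hx (by simpa using hkl)
  exact Set.infinite_range_of_injective hinj (h.subset fun _ ⟨k, hk⟩ => ⟨k • x, hk⟩)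

namespace Matrix

variable {R n m : Type*}

instance [AddCommGroup R] [IsAddTorsionFree R] : IsAddTorsionFree (Matrix n m R) :=
  inferInstanceAs (IsAddTorsionFree (n → m → R))

variable [Fintype n] [Fintype m] [DecidableEq n] [DecidableEq m]

theorem fromBlocks_one_mul_mul_fromBlocks_one_neg [Ring R] (U : Matrix n m R)
    (A : Matrix n n R) (B : Matrix n m R) (C : Matrix m n R) (D : Matrix m m R) :
    fromBlocks 1 U 0 1 * fromBlocks A B C D * fromBlocks 1 (-U) 0 1 =
      fromBlocks (A + U * C) (B + U * D - (A + U * C) * U) C (D - C * U) := by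
  simp only [fromBlocks_multiply, Matrix.one_mul, Matrix.mul_one, Matrix.zero_mul,
    Matrix.mul_zero, Matrix.mul_neg, add_zero, zero_add]
  congr 1 <;> abel

section FiniteConj

variable [Ring R] [IsAddTorsionFree R] {A : Matrix n n R} {B : Matrix n m R} {C : Matrix m n R}
  {D : Matrix m m R}

theorem fromBlocks₂₁_eq_zero_of_finite_conj
    (h : (Set.range fun U : Matrix n m R =>
      fromBlocks 1 U 0 1 * fromBlocks A B C D * fromBlocks 1 (-U) 0 1).Finite) : C = 0 := by
  have hφ := AddMonoidHom.eq_zero_of_finite_range_const_add D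
    (-AddMonoidHom.mk' (C * ·) (Matrix.mul_add C)) <| by
      refine (h.image toBlocks₂₂).subset ?_
      rintro _ ⟨U, rfl⟩
      exact ⟨_, ⟨U, rfl⟩, by simp [fromBlocks_one_mul_mul_fromBlocks_one_neg, sub_eq_add_neg]⟩
  ext i j
  simpa using congrFun (congrFun (DFunLike.congr_fun hφ (single j i 1)) i) i

theorem fromBlocks₁₁_mul_eq_mul_fromBlocks₂₂_of_finite_conj
    (h : (Set.range fun U : Matrix n m R =>
      fromBlocks 1 U 0 1 * fromBlocks A B C D * fromBlocks 1 (-U) 0 1).Finite)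
    (U : Matrix n m R) : A * U = U * D := by
  obtain rfl := fromBlocks₂₁_eq_zero_of_finite_conj h
  have hφ := AddMonoidHom.eq_zero_of_finite_range_const_add B
    (AddMonoidHom.mk' (fun U : Matrix n m R => U * D - A * U) fun U V => by
      simp only [Matrix.add_mul, Matrix.mul_add]; abel) <| by
      refine (h.image toBlocks₁₂).subset ?_
      rintro _ ⟨U, rfl⟩
      exact ⟨_, ⟨U, rfl⟩, by simp [fromBlocks_one_mul_mul_fromBlocks_one_neg, add_sub_assoc]⟩
  exact (sub_eq_zero.mp (DFunLike.congr_fun hφ U)).symm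

end FiniteConj

theorem eq_smul_one_of_forall_mul_eq_mul [Ring R] {A : Matrix n n R} {D : Matrix Unit Unit R}
    (h : ∀ U : Matrix n Unit R, A * U = U * D) : A = D () () • 1 := by
  ext i j
  have := congrFun (congrFun (h (single j () 1)) i) ()
  rw [mul_single_apply_same, mul_one] at this
  rcases eq_or_ne i j with rfl | hij
  · simpa [single_mul_apply_same] using this
  · simpa [single_mul_apply_of_ne _ _ _ _ _ hij, hij] using this

end Matrix

theorem jmat_eq_fromBlocks (d : ℕ) (U : Matrix (Fin (d - 1)) Unit ℤ) :
    jmat d (fun i => U i ()) = fromBlocks 1 U 0 1 :=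
  rfl

theorem mem_unipotent_or_neg_of_finite_conjugates_general
    (d : ℕ)
    (g : (Matrix (Fin (d - 1) ⊕ Unit) (Fin (d - 1) ⊕ Unit) ℤ)ˣ)
    (hfin : {h : (Matrix (Fin (d - 1) ⊕ Unit) (Fin (d - 1) ⊕ Unit) ℤ)ˣ |
        ∃ u : Fin (d - 1) → ℤ, h = jU d u * g * (jU d u)⁻¹}.Finite) :
    (∃ u : Fin (d - 1) → ℤ, (g : Matrix (Fin (d - 1) ⊕ Unit) (Fin (d - 1) ⊕ Unit) ℤ) = jmat d u) ∨
    (∃ u : Fin (d - 1) → ℤ,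
      (g : Matrix (Fin (d - 1) ⊕ Unit) (Fin (d - 1) ⊕ Unit) ℤ) = -(jmat d u)) := by
  obtain ⟨A, B, C, D, hg⟩ : ∃ A B C D, g.val = fromBlocks A B C D :=
    ⟨_, _, _, _, (fromBlocks_toBlocks g.val).symm⟩
  have hconj : (Set.range fun U : Matrix (Fin (d - 1)) Unit ℤ =>
      fromBlocks 1 U 0 1 * fromBlocks A B C D * fromBlocks 1 (-U) 0 1).Finite := by
    refine (hfin.image Units.val).subset ?_
    rintro _ ⟨U, rfl⟩
    refine ⟨_, ⟨fun i => U i (), rfl⟩, ?_⟩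
    rw [Units.val_mul, Units.val_mul, ← hg]
    rfl
  obtain rfl := fromBlocks₂₁_eq_zero_of_finite_conj hconj
  obtain ⟨δ, rfl⟩ : ∃ δ : ℤ, D = δ • 1 := ⟨D () (), by ext ⟨⟩ ⟨⟩; simp⟩
  obtain rfl : A = δ • 1 := by
    simpa using eq_smul_one_of_forall_mul_eq_mul (fromBlocks₁₁_mul_eq_mul_fromBlocks₂₂_of_finite_conj hconj)
  have hδ : IsUnit δ := by
    have hD := (isUnit_fromBlocks_zero₂₁.mp (hg ▸ g.isUnit)).2
    rw [isUnit_iff_isUnit_det, det_unique] at hD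
    simpa using hD
  rw [hg]
  rcases Int.isUnit_iff.mp hδ with rfl | rfl
  · exact Or.inl ⟨fun i => B i (), by simp [jmat_eq_fromBlocks]⟩
  · refine Or.inr ⟨fun i => (-B) i (), ?_⟩
    rw [jmat_eq_fromBlocks, fromBlocks_neg]
    simp

/-- Relative ICC property of `Λ ≅ ℤ^{d-1}` inside `GL_d(ℤ)` (here `GL_d(ℤ)` is realized as
the units of the `d × d` integer matrices, with indices split as `(d-1) + 1`, and
`Λ = {jU d u : u ∈ ℤ^{d-1}}` is the subgroup of unipotent matrices `[[I,u],[0,1]]`):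
if `g ∈ GL_d(ℤ)` has only finitely many `Λ`-conjugates, then `g ∈ Λ` or `−g ∈ Λ`. -/
theorem mem_unipotent_or_neg_of_finite_conjugates
    (d : ℕ) (hd : 3 ≤ d)
    (g : (Matrix (Fin (d - 1) ⊕ Unit) (Fin (d - 1) ⊕ Unit) ℤ)ˣ)
    (hfin : {h : (Matrix (Fin (d - 1) ⊕ Unit) (Fin (d - 1) ⊕ Unit) ℤ)ˣ |
        ∃ u : Fin (d - 1) → ℤ, h = jU d u * g * (jU d u)⁻¹}.Finite) :
    (∃ u : Fin (d - 1) → ℤ, (g : Matrix (Fin (d - 1) ⊕ Unit) (Fin (d - 1) ⊕ Unit) ℤ) = jmat d u) ∨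
    (∃ u : Fin (d - 1) → ℤ,
      (g : Matrix (Fin (d - 1) ⊕ Unit) (Fin (d - 1) ⊕ Unit) ℤ) = -(jmat d u)) :=
  mem_unipotent_or_neg_of_finite_conjugates_general d g hfin
end

section
/- Let Γ₁ and Γ₂ be discrete groups, Γ = Γ₁ × Γ₂, and let π_i: ΔΓ → ΔΓ_i be the continuous extensions of the coordinate projections to the Stone–Čech compactifications. Then ∂Γ = π₁^{-1}(∂Γ₁) ∪ π₂^{-1}(∂Γ₂); moreover, if Γ_i acts continuously on a compact Hausdorff space K with η ∈ Prob(K), then for the Γ-action obtained by composing with the projection, the set of η-proximal points satisfies ∂_η Γ = π_i^{-1}(∂_η Γ_i). -/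
open Filter MeasureTheory Topology

section Helpers

variable {X : Type*} [TopologicalSpace X] [DiscreteTopology X]

lemma scu_clopen (A : Set X) :
    ∃ C : Set (StoneCech X), IsClopen C ∧ stoneCechUnit ⁻¹' C = A ∧
      C = closure (stoneCechUnit '' A) := by
  classical
  have hf : Continuous (fun x : X => (decide (x ∈ A) : Bool)) := continuous_of_discreteTopology
  set g := stoneCechExtend hf with hgdef
  have hg : Continuous g := continuous_stoneCechExtend hf
  have hext : ∀ x, g (stoneCechUnit x) = decide (x ∈ A) := fun x =>
    congrFun (stoneCechExtend_extends hf) x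
  have hclopen : IsClopen (g ⁻¹' {true}) :=
    ⟨(isClosed_discrete _).preimage hg, (isOpen_discrete _).preimage hg⟩
  have hpre : stoneCechUnit ⁻¹' (g ⁻¹' {true}) = A := by
    ext x
    simp [Set.mem_preimage, hext x]
  refine ⟨g ⁻¹' {true}, hclopen, hpre, le_antisymm ?_ ?_⟩
  · intro c hc
    have h1 : (g ⁻¹' {true}) ⊆
        closure ((g ⁻¹' {true}) ∩ Set.range (stoneCechUnit : X → StoneCech X)) :=
      denseRange_stoneCechUnit.open_subset_closure_inter hclopen.isOpen
    refine closure_mono ?_ (h1 hc)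
    rintro _ ⟨hmem, x, rfl⟩
    have : x ∈ A := by
      have := hmem
      simpa [Set.mem_preimage, hext x] using this
    exact ⟨x, this, rfl⟩
  · apply closure_minimal _ hclopen.isClosed
    rintro _ ⟨x, hx, rfl⟩
    simp [Set.mem_preimage, hext x, hx]

lemma scu_mem_comap_iff (A : Set X) (ω : StoneCech X) :
    A ∈ Filter.comap (stoneCechUnit : X → StoneCech X) (𝓝 ω) ↔
      ω ∈ closure (stoneCechUnit '' A) := by
  obtain ⟨C, hC, hpre, hcl⟩ := scu_clopen A
  constructor
  · rintro ⟨U, hU, hUA⟩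
    rw [← hcl]
    have h1 : interior U ⊆ closure (interior U ∩ Set.range (stoneCechUnit : X → StoneCech X)) :=
      denseRange_stoneCechUnit.open_subset_closure_inter isOpen_interior
    have h2 : interior U ∩ Set.range (stoneCechUnit : X → StoneCech X) ⊆ C := by
      rintro _ ⟨hmem, x, rfl⟩
      have hxA : x ∈ A := hUA (show stoneCechUnit x ∈ U from interior_subset hmem)
      rw [← hpre] at hxA; exact hxA
    have : ω ∈ closure C := closure_mono h2 (h1 (mem_interior_iff_mem_nhds.2 hU))
    rwa [hC.isClosed.closure_eq] at this
  · intro hω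
    rw [← hcl] at hω
    exact ⟨C, hC.isOpen.mem_nhds hω, le_of_eq hpre⟩

lemma scu_isolated (x : X) : IsOpen ({stoneCechUnit x} : Set (StoneCech X)) := by
  obtain ⟨C, hC, hpre, hcl⟩ := scu_clopen ({x} : Set X)
  have : C = {stoneCechUnit x} := by
    rw [hcl, Set.image_singleton, closure_singleton]
  rw [← this]; exact hC.isOpen

lemma scu_injective : Function.Injective (stoneCechUnit : X → StoneCech X) := by
  intro x y hxy
  obtain ⟨C, hC, hpre, hcl⟩ := scu_clopen ({x} : Set X)
  have hx : x ∈ stoneCechUnit ⁻¹' C := by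
    rw [hpre]; rfl
  have hy : y ∈ stoneCechUnit ⁻¹' C := by
    simpa [Set.mem_preimage, ← hxy] using hx
  rw [hpre] at hy; exact hy.symm

lemma scu_map_comap {Y : Type*} [TopologicalSpace Y] [DiscreteTopology Y]
    (φ : X → Y) (ω : StoneCech X) :
    Filter.map φ (Filter.comap (stoneCechUnit : X → StoneCech X) (𝓝 ω)) =
      Filter.comap (stoneCechUnit : Y → StoneCech Y)
        (𝓝 (stoneCechExtend (continuous_of_discreteTopology
          (f := fun x : X => stoneCechUnit (φ x))) ω)) := by
  have hc : Continuous (fun x : X => stoneCechUnit (φ x)) := continuous_of_discreteTopology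
  set π := stoneCechExtend hc with hπ
  have hπc : Continuous π := continuous_stoneCechExtend hc
  have hcomm : ∀ x, π (stoneCechUnit x) = stoneCechUnit (φ x) := fun x =>
    congrFun (stoneCechExtend_extends hc) x
  apply le_antisymm
  · rw [Filter.map_le_iff_le_comap, Filter.comap_comap]
    have : (stoneCechUnit : Y → StoneCech Y) ∘ φ = π ∘ stoneCechUnit := by
      funext x; exact (hcomm x).symm
    rw [this, ← Filter.comap_comap]
    exact Filter.comap_mono (hπc.continuousAt.le_comap)
  · intro A hA
    rw [Filter.mem_map, scu_mem_comap_iff] at hA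
    rw [scu_mem_comap_iff]
    have h1 : π ω ∈ π '' closure (stoneCechUnit '' (φ ⁻¹' A)) := ⟨ω, hA, rfl⟩
    have h2 : π '' closure (stoneCechUnit '' (φ ⁻¹' A)) ⊆
        closure (π '' (stoneCechUnit '' (φ ⁻¹' A))) :=
      image_closure_subset_closure_image hπc
    refine closure_mono ?_ (h2 h1)
    rintro _ ⟨_, ⟨x, hx, rfl⟩, rfl⟩
    exact ⟨φ x, hx, (hcomm x).symm⟩

end Helpers

lemma prox_pullback {Γ Γ₁ : Type*} [Group Γ] [Group Γ₁]
    [TopologicalSpace Γ] [DiscreteTopology Γ] [TopologicalSpace Γ₁] [DiscreteTopology Γ₁]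
    {K : Type*} [TopologicalSpace K] [MeasurableSpace K]
    (φ : Γ → Γ₁) (hmul : ∀ p q : Γ, φ (p * q) = φ p * φ q) (hsurj : Function.Surjective φ)
    (act : Γ₁ → K → K) (η : MeasureTheory.Measure K) :
    proximalSet (fun p : Γ => act (φ p)) η =
      (stoneCechExtend (continuous_of_discreteTopology
        (f := fun p : Γ => stoneCechUnit (φ p)))) ⁻¹' proximalSet act η := by
  ext ω
  simp only [proximalSet, Set.mem_setOf_eq, Set.mem_preimage]
  constructor
  · intro H h₁ f
    obtain ⟨h, rfl⟩ := hsurj h₁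
    have H' := H h f
    rw [← scu_map_comap φ ω, Filter.tendsto_map'_iff]
    have : ((fun g : Γ₁ =>
        (∫ x, f x ∂(MeasureTheory.Measure.map (act (g * φ h)) η)) -
          ∫ x, f x ∂(MeasureTheory.Measure.map (act g) η)) ∘ φ) =
        fun p : Γ =>
        (∫ x, f x ∂(MeasureTheory.Measure.map (act (φ (p * h))) η)) -
          ∫ x, f x ∂(MeasureTheory.Measure.map (act (φ p)) η) := by
      funext p
      simp [Function.comp, hmul]
    rw [this]
    exact H'
  · intro H h f
    have H' := H (φ h) f
    rw [← scu_map_comap φ ω, Filter.tendsto_map'_iff] at H'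
    have : ((fun g : Γ₁ =>
        (∫ x, f x ∂(MeasureTheory.Measure.map (act (g * φ h)) η)) -
          ∫ x, f x ∂(MeasureTheory.Measure.map (act g) η)) ∘ φ) =
        fun p : Γ =>
        (∫ x, f x ∂(MeasureTheory.Measure.map (act (φ (p * h))) η)) -
          ∫ x, f x ∂(MeasureTheory.Measure.map (act (φ p)) η) := by
      funext p
      simp [Function.comp, hmul]
    rw [this] at H'
    exact H'


/-- For discrete groups `Γ₁, Γ₂` and `Γ = Γ₁ × Γ₂`, with `π_i : ΔΓ → ΔΓ_i` the continuous
extensions of the coordinate projections, the Stone–Čech boundary satisfies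
`∂Γ = π₁⁻¹(∂Γ₁) ∪ π₂⁻¹(∂Γ₂)`; moreover, if `Γ_i` acts continuously on a compact Hausdorff
space `K` with a regular Borel probability measure `η`, then for the `Γ`-action obtained by
composing with the projection one has `∂_η Γ = π_i⁻¹(∂_η Γ_i)`. -/
theorem stoneCech_boundary_prod_and_proximal_pullback
    (Γ₁ Γ₂ : Type*) [Group Γ₁] [Group Γ₂]
    [TopologicalSpace Γ₁] [DiscreteTopology Γ₁]
    [TopologicalSpace Γ₂] [DiscreteTopology Γ₂]
    (K : Type*) [TopologicalSpace K] [CompactSpace K] [T2Space K]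
    [MeasurableSpace K] [BorelSpace K] :
    letI π₁ : StoneCech (Γ₁ × Γ₂) → StoneCech Γ₁ :=
      stoneCechExtend (continuous_of_discreteTopology
        (f := fun p : Γ₁ × Γ₂ => stoneCechUnit p.1))
    letI π₂ : StoneCech (Γ₁ × Γ₂) → StoneCech Γ₂ :=
      stoneCechExtend (continuous_of_discreteTopology
        (f := fun p : Γ₁ × Γ₂ => stoneCechUnit p.2))
    ((Set.range (stoneCechUnit : Γ₁ × Γ₂ → StoneCech (Γ₁ × Γ₂)))ᶜ =
        π₁ ⁻¹' (Set.range (stoneCechUnit : Γ₁ → StoneCech Γ₁))ᶜ ∪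
        π₂ ⁻¹' (Set.range (stoneCechUnit : Γ₂ → StoneCech Γ₂))ᶜ) ∧
    (∀ (act : Γ₁ → K → K), (∀ g, Continuous (act g)) → act 1 = id →
      (∀ g h, act (g * h) = act g ∘ act h) →
      ∀ (η : MeasureTheory.Measure K), IsProbabilityMeasure η → η.Regular →
        proximalSet (fun p : Γ₁ × Γ₂ => act p.1) η = π₁ ⁻¹' proximalSet act η) ∧
    (∀ (act : Γ₂ → K → K), (∀ g, Continuous (act g)) → act 1 = id →
      (∀ g h, act (g * h) = act g ∘ act h) →
      ∀ (η : MeasureTheory.Measure K), IsProbabilityMeasure η → η.Regular →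
        proximalSet (fun p : Γ₁ × Γ₂ => act p.2) η = π₂ ⁻¹' proximalSet act η) := by
  set π₁ : StoneCech (Γ₁ × Γ₂) → StoneCech Γ₁ :=
    stoneCechExtend (continuous_of_discreteTopology
      (f := fun p : Γ₁ × Γ₂ => stoneCechUnit p.1)) with hπ₁def
  set π₂ : StoneCech (Γ₁ × Γ₂) → StoneCech Γ₂ :=
    stoneCechExtend (continuous_of_discreteTopology
      (f := fun p : Γ₁ × Γ₂ => stoneCechUnit p.2)) with hπ₂def
  have hπ₁u : ∀ p : Γ₁ × Γ₂, π₁ (stoneCechUnit p) = stoneCechUnit p.1 := fun p =>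
    congrFun (stoneCechExtend_extends _) p
  have hπ₂u : ∀ p : Γ₁ × Γ₂, π₂ (stoneCechUnit p) = stoneCechUnit p.2 := fun p =>
    congrFun (stoneCechExtend_extends _) p
  have hπ₁c : Continuous π₁ := continuous_stoneCechExtend _
  have hπ₂c : Continuous π₂ := continuous_stoneCechExtend _
  refine ⟨?_, ?_, ?_⟩
  · have key : Set.range (stoneCechUnit : Γ₁ × Γ₂ → StoneCech (Γ₁ × Γ₂)) =
        π₁ ⁻¹' Set.range (stoneCechUnit : Γ₁ → StoneCech Γ₁) ∩
        π₂ ⁻¹' Set.range (stoneCechUnit : Γ₂ → StoneCech Γ₂) := by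
      apply Set.Subset.antisymm
      · rintro _ ⟨p, rfl⟩
        exact ⟨⟨p.1, (hπ₁u p).symm⟩, ⟨p.2, (hπ₂u p).symm⟩⟩
      · rintro ω ⟨⟨g₁, hg₁⟩, ⟨g₂, hg₂⟩⟩
        set V : Set (StoneCech (Γ₁ × Γ₂)) :=
          π₁ ⁻¹' {stoneCechUnit g₁} ∩ π₂ ⁻¹' {stoneCechUnit g₂} with hV
        have hVopen : IsOpen V :=
          ((scu_isolated g₁).preimage hπ₁c).inter ((scu_isolated g₂).preimage hπ₂c)
        have hωV : ω ∈ V := ⟨hg₁.symm, hg₂.symm⟩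
        have hsub : V ∩ Set.range (stoneCechUnit : Γ₁ × Γ₂ → StoneCech (Γ₁ × Γ₂)) ⊆
            {stoneCechUnit (g₁, g₂)} := by
          rintro _ ⟨⟨hv1, hv2⟩, p, rfl⟩
          have e1 : p.1 = g₁ := scu_injective (by rw [← hπ₁u p]; exact hv1)
          have e2 : p.2 = g₂ := scu_injective (by rw [← hπ₂u p]; exact hv2)
          have : p = (g₁, g₂) := Prod.ext e1 e2
          simp [this]
        have h1 := denseRange_stoneCechUnit.open_subset_closure_inter hVopen hωV
        have h2 := closure_mono hsub h1
        rw [closure_singleton] at h2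
        exact ⟨(g₁, g₂), h2.symm⟩
    rw [Set.preimage_compl, Set.preimage_compl, ← Set.compl_inter, key]
  · intro act _ _ _ η _ _
    exact prox_pullback (fun p : Γ₁ × Γ₂ => p.1) (fun p q => rfl)
      (fun g₁ => ⟨(g₁, 1), rfl⟩) act η
  · intro act _ _ _ η _ _
    exact prox_pullback (fun p : Γ₁ × Γ₂ => p.2) (fun p q => rfl)
      (fun g₂ => ⟨(1, g₂), rfl⟩) act η
end
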